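/- arXiv:0706.3162 — 5 statements merged into one kernel-verified Lean document; each statement's English description precedes it below -/
import Mathlib

section
/- Let α > 0. Suppose f is continuously differentiable on (0,1) and its derivative f′ is integrable on (0,r) for every 0 < r < 1. Then the right-hand limit f(0+) = lim_{t→0+} f(t) exists, I^α[f] is continuously differentiable on (0,1), and for every x in (0,1), (d/dx) I^α[f](x) = (f(0+)/Γ(α)) x^{α−1} + I^α[f′](x), where I^α[g](x) = (1/Γ(α)) ∫₀ˣ (x−t)^{α−1} g(t) dt. -/
open MeasureTheory Real Set Filter intervalIntegral

lemma kerII (β x : ℝ) (hβ : 0 < β) (a b : ℝ) :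
    IntervalIntegrable (fun t => (x - t) ^ (β - 1)) volume a b := by
  have h := (intervalIntegral.intervalIntegrable_rpow'
      (show (-1:ℝ) < β - 1 by linarith) (a := x - a) (b := x - b)).comp_sub_left x
  simpa using h

lemma rpow_le_max {γ d₁ d₂ u : ℝ} (h₁ : 0 < d₁) (hu : u ∈ Icc d₁ d₂) :
    u ^ γ ≤ max (d₁ ^ γ) (d₂ ^ γ) := by
  rcases le_total 0 γ with hγ | hγ
  · exact le_max_of_le_right (Real.rpow_le_rpow (h₁.le.trans hu.1) hu.2 hγ)
  · exact le_max_of_le_left (Real.rpow_le_rpow_of_nonpos h₁ hu.1 hγ)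

lemma ker_integral {β x t₀ : ℝ} (hβ : 0 < β) (h : t₀ ≤ x) :
    ∫ t in t₀..x, (x - t) ^ (β - 1) = (x - t₀) ^ β / β := by
  have hcont : ContinuousOn (fun t : ℝ => -((x - t) ^ β / β)) (Icc t₀ x) := by
    apply ContinuousOn.neg
    apply ContinuousOn.div_const
    exact ((continuous_const.sub continuous_id).continuousOn).rpow_const
      (fun t _ => Or.inr hβ.le)
  have hderiv : ∀ t ∈ Ioo t₀ x,
      HasDerivWithinAt (fun t : ℝ => -((x - t) ^ β / β)) ((x - t) ^ (β - 1)) (Ioi t) t := by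
    intro t ht
    have h1 : HasDerivAt (fun t : ℝ => x - t) (-1) t := (hasDerivAt_id t).const_sub x
    have h2 := h1.rpow_const (p := β) (Or.inl (ne_of_gt (sub_pos.2 ht.2)))
    have h3 := (h2.div_const β).neg
    have heq : -(-1 * β * (x - t) ^ (β - 1) / β) = (x - t) ^ (β - 1) := by
      field_simp
    rw [heq] at h3
    exact h3.hasDerivWithinAt
  have := intervalIntegral.integral_eq_sub_of_hasDeriv_right_of_le h hcont hderiv
    (kerII β x hβ t₀ x)
  rw [this]
  rw [sub_self, Real.zero_rpow hβ.ne']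
  ring

lemma ker_meas (β x : ℝ) : Measurable fun t : ℝ => (x - t) ^ (β - 1) := by fun_prop

lemma ker_intOn {β x c : ℝ} (hβ : 0 < β) (hc : c ≤ x) :
    IntegrableOn (fun t : ℝ => (x - t) ^ (β - 1)) (Ioc c x) :=
  (intervalIntegrable_iff_integrableOn_Ioc_of_le hc).1 (kerII β x hβ c x)

lemma ker_nonneg {β x : ℝ} {t : ℝ} (ht : t ≤ x) : 0 ≤ (x - t) ^ (β - 1) :=
  Real.rpow_nonneg (sub_nonneg.2 ht) _

lemma kerII' (β t₀ : ℝ) (hβ : 0 < β) (a b : ℝ) :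
    IntervalIntegrable (fun y => (y - t₀) ^ (β - 1)) volume a b := by
  have h := (intervalIntegral.intervalIntegrable_rpow'
      (show (-1:ℝ) < β - 1 by linarith) (a := a - t₀) (b := b - t₀)).comp_sub_right t₀
  simpa using h

lemma ker_intOn' {β x t₀ : ℝ} (hβ : 0 < β) (h : t₀ ≤ x) :
    IntegrableOn (fun y : ℝ => (y - t₀) ^ (β - 1)) (Ioc t₀ x) :=
  (intervalIntegrable_iff_integrableOn_Ioc_of_le h).1 (kerII' β t₀ hβ t₀ x)

lemma ker_integral' {β x t₀ : ℝ} (hβ : 0 < β) (h : t₀ ≤ x) :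
    ∫ y in t₀..x, (y - t₀) ^ (β - 1) = (x - t₀) ^ β / β := by
  have h1 := intervalIntegral.integral_comp_sub_right
    (a := t₀) (b := x) (fun u => u ^ (β - 1)) t₀
  rw [h1, sub_self, integral_rpow (Or.inl (by linarith))]
  rw [Real.zero_rpow (by intro hc; rw [sub_add_cancel] at hc; exact hβ.ne' hc),
    sub_add_cancel, sub_zero]

/-- integrability of kernel times continuous function -/
lemma kmulC_int {β x : ℝ} (hβ : 0 < β) (hx0 : 0 ≤ x) (F : ℝ → ℝ)
    (hF : ContinuousOn F (Icc 0 x)) :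
    IntegrableOn (fun t => (x - t) ^ (β - 1) * F t) (Ioc 0 x) := by
  rcases isCompact_Icc.exists_bound_of_continuousOn hF with ⟨C, hC⟩
  apply Integrable.mono' ((ker_intOn hβ hx0).const_mul C)
  · exact ((ker_meas β x).aestronglyMeasurable).mul
      ((hF.mono Ioc_subset_Icc_self).aestronglyMeasurable measurableSet_Ioc)
  · filter_upwards [ae_restrict_mem measurableSet_Ioc] with t ht
    rw [norm_mul, Real.norm_eq_abs, Real.norm_eq_abs,
      abs_of_nonneg (ker_nonneg ht.2)]
    calc (x - t) ^ (β - 1) * |F t| ≤ (x - t) ^ (β - 1) * C := by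
          apply mul_le_mul_of_nonneg_left _ (ker_nonneg ht.2)
          simpa using hC t ⟨ht.1.le, ht.2⟩
      _ = C * (x - t) ^ (β - 1) := mul_comm _ _

/-- integrability of kernel times g -/
lemma kmul_int (g : ℝ → ℝ) (hg_meas : Measurable g)
    (hg_cont : ContinuousOn g (Ioo 0 1))
    (hg_int : ∀ r : ℝ, 0 < r → r < 1 → IntegrableOn g (Ioo 0 r) volume)
    {β x : ℝ} (hβ : 0 < β) (hx : x ∈ Ioo (0:ℝ) 1) :
    IntegrableOn (fun t => (x - t) ^ (β - 1) * g t) (Ioc 0 x) := by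
  have hx2 : (0:ℝ) < x / 2 := by linarith [hx.1]
  have hle : x / 2 ≤ x := by linarith [hx.1]
  have hAESM : AEStronglyMeasurable (fun t => (x - t) ^ (β - 1) * g t)
      (volume.restrict (Ioc 0 x)) :=
    ((ker_meas β x).mul hg_meas).aestronglyMeasurable
  rw [show Ioc (0:ℝ) x = Ioc 0 (x/2) ∪ Ioc (x/2) x from
    (Set.Ioc_union_Ioc_eq_Ioc hx2.le hle).symm]
  apply IntegrableOn.union
  · -- near 0 : kernel bounded
    set M := max ((x/2) ^ (β - 1)) (x ^ (β - 1)) with hM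
    have hgint : IntegrableOn g (Ioc 0 (x/2)) :=
      (hg_int x hx.1 hx.2).mono_set (fun t ht => ⟨ht.1, lt_of_le_of_lt ht.2 (by linarith [hx.1])⟩)
    apply Integrable.mono' (hgint.norm.const_mul M)
    · exact hAESM.mono_measure (Measure.restrict_mono
        (show Ioc 0 (x/2) ⊆ Ioc 0 x from fun t ht => ⟨ht.1, le_trans ht.2 hle⟩) le_rfl)
    · filter_upwards [ae_restrict_mem measurableSet_Ioc] with t ht
      have htx : t ≤ x := le_trans ht.2 hle
      rw [norm_mul, Real.norm_eq_abs, Real.norm_eq_abs, abs_of_nonneg (ker_nonneg htx)]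
      apply mul_le_mul_of_nonneg_right _ (abs_nonneg _)
      exact rpow_le_max hx2 ⟨by linarith [ht.2], by linarith [ht.1]⟩
  · -- near x : g bounded
    rcases isCompact_Icc.exists_bound_of_continuousOn
      (hg_cont.mono (fun t (ht : t ∈ Icc (x/2) x) => ⟨lt_of_lt_of_le hx2 ht.1, lt_of_le_of_lt ht.2 hx.2⟩))
      with ⟨C, hC⟩
    apply Integrable.mono' ((ker_intOn hβ hle).const_mul C)
    · exact hAESM.mono_measure (Measure.restrict_mono
        (show Ioc (x/2) x ⊆ Ioc 0 x from fun t ht => ⟨lt_trans hx2 ht.1, ht.2⟩) le_rfl)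
    · filter_upwards [ae_restrict_mem measurableSet_Ioc] with t ht
      rw [norm_mul, Real.norm_eq_abs, Real.norm_eq_abs, abs_of_nonneg (ker_nonneg ht.2)]
      calc (x - t) ^ (β - 1) * |g t| ≤ (x - t) ^ (β - 1) * C := by
            apply mul_le_mul_of_nonneg_left _ (ker_nonneg ht.2)
            simpa using hC t ⟨ht.1.le, ht.2⟩
        _ = C * (x - t) ^ (β - 1) := mul_comm _ _


section
variable (g : ℝ → ℝ) (hg_meas : Measurable g)
  (hg_cont : ContinuousOn g (Ioo 0 1))
  (hg_int : ∀ r : ℝ, 0 < r → r < 1 → IntegrableOn g (Ioo 0 r) volume)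

include hg_meas hg_cont hg_int in
lemma Q_contAt {β : ℝ} (hβ : 0 < β) {x₀ : ℝ} (hx₀ : x₀ ∈ Ioo (0:ℝ) 1) :
    ContinuousAt (fun x => ∫ t in (0:ℝ)..x, (x - t) ^ (β - 1) * g t) x₀ := by
  obtain ⟨hx₀0, hx₀1⟩ := hx₀
  set c : ℝ := x₀ / 2 with hc_def
  set δ : ℝ := min (x₀ / 4) ((1 - x₀) / 2) with hδ_def
  have hδ1 : δ ≤ x₀ / 4 := min_le_left _ _
  have hδ2 : δ ≤ (1 - x₀) / 2 := min_le_right _ _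
  have hδ0 : 0 < δ := lt_min (by linarith) (by linarith)
  have hc0 : 0 < c := by simp only [hc_def]; linarith
  have hcd : 0 < x₀ - δ - c := by simp only [hc_def]; linarith
  have hU : Ioo (x₀ - δ) (x₀ + δ) ∈ nhds x₀ := Ioo_mem_nhds (by linarith) (by linarith)
  have hxU : ∀ x ∈ Ioo (x₀ - δ) (x₀ + δ), c < x ∧ x ∈ Ioo (0:ℝ) 1 := by
    intro x hx
    have h1 : c < x := by simp only [hc_def]; cases hx; linarith
    exact ⟨h1, ⟨lt_trans hc0 h1, by cases hx; linarith⟩⟩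
  set Mo : ℝ := x₀ + δ - c with hMo_def
  have hMo0 : 0 < Mo := by simp only [hMo_def, hc_def]; linarith
  -- part A
  set A : ℝ → ℝ := fun x => ∫ t in Ioc (0:ℝ) c, (x - t) ^ (β - 1) * g t with hA_def
  have hA : ContinuousAt A x₀ := by
    set M : ℝ := max ((x₀ - δ - c) ^ (β - 1)) ((x₀ + δ) ^ (β - 1)) with hM_def
    apply continuousAt_of_dominated (bound := fun t => M * |g t|)
    · exact Eventually.of_forall fun x =>
        (((ker_meas β x).mul hg_meas).aestronglyMeasurable)
    · filter_upwards [hU] with x hx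
      filter_upwards [ae_restrict_mem measurableSet_Ioc] with t ht
      have h1 : x₀ - δ - c ≤ x - t := by cases hx; cases ht; linarith
      have h2 : x - t ≤ x₀ + δ := by cases hx; cases ht; linarith
      rw [norm_mul, Real.norm_eq_abs, Real.norm_eq_abs,
        abs_of_nonneg (Real.rpow_nonneg (by linarith) _)]
      exact mul_le_mul_of_nonneg_right (rpow_le_max hcd ⟨h1, h2⟩) (abs_nonneg _)
    · exact (((hg_int x₀ hx₀0 hx₀1).mono_set
        (fun t ht => ⟨ht.1, by cases ht; simp only [hc_def] at *; linarith⟩)).norm).const_mul M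
    · filter_upwards [ae_restrict_mem measurableSet_Ioc] with t ht
      have h1 : x₀ - t ≠ 0 := by cases ht; simp only [hc_def] at *; intro h; linarith
      exact (((continuousAt_id.sub continuousAt_const).rpow_const
        (Or.inl h1)).mul continuousAt_const)
  -- part B
  set B' : ℝ → ℝ := fun x => ∫ u in Ioc (0:ℝ) Mo,
      (Ioc (0:ℝ) (x - c)).indicator (fun u => u ^ (β - 1) * g (x - u)) u with hB'_def
  have hK : Icc c (x₀ + δ) ⊆ Ioo (0:ℝ) 1 := by
    intro y hy
    constructor
    · linarith [hy.1]
    · have := hy.2; simp only [hδ_def] at *; linarith [min_le_right (x₀/4) ((1-x₀)/2)]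
  obtain ⟨C, hC⟩ := isCompact_Icc.exists_bound_of_continuousOn (hg_cont.mono hK)
  have hC0 : 0 ≤ C := le_trans (norm_nonneg _) (hC c ⟨le_refl c, by linarith⟩)
  have hB' : ContinuousAt B' x₀ := by
    apply continuousAt_of_dominated (bound := fun u => C * u ^ (β - 1))
    · refine Eventually.of_forall fun x => ?_
      refine (Measurable.indicator ?_ measurableSet_Ioc).aestronglyMeasurable
      exact (by fun_prop : Measurable fun u : ℝ => u ^ (β - 1)).mul
        (hg_meas.comp (measurable_const.sub measurable_id))
    · filter_upwards [hU] with x hx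
      filter_upwards [ae_restrict_mem measurableSet_Ioc] with u hu
      by_cases hmem : u ∈ Ioc (0:ℝ) (x - c)
      · rw [Set.indicator_of_mem hmem]
        have hxu : x - u ∈ Icc c (x₀ + δ) := by
          cases hmem; cases hx; constructor <;> linarith
        rw [norm_mul, Real.norm_eq_abs, Real.norm_eq_abs,
          abs_of_nonneg (Real.rpow_nonneg hu.1.le _), mul_comm]
        exact mul_le_mul (le_trans (le_abs_self _)
          (by simpa [Real.norm_eq_abs] using hC _ hxu)) le_rfl
          (Real.rpow_nonneg hu.1.le _) hC0
      · rw [Set.indicator_of_notMem hmem]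
        simp only [norm_zero]
        exact mul_nonneg hC0 (Real.rpow_nonneg hu.1.le _)
    · have : IntegrableOn (fun u : ℝ => u ^ (β - 1)) (Ioc 0 Mo) := by
        exact (intervalIntegrable_iff_integrableOn_Ioc_of_le hMo0.le).1
          (intervalIntegral.intervalIntegrable_rpow' (by linarith))
      exact this.const_mul C
    · have hane : ∀ᵐ (u : ℝ) ∂(volume.restrict (Ioc (0:ℝ) Mo)), u ≠ x₀ - c :=
        ae_restrict_of_ae (by
          rw [ae_iff]
          simp only [ne_eq, not_not, setOf_eq_eq_singleton]
          exact measure_singleton _)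
      filter_upwards [ae_restrict_mem measurableSet_Ioc, hane] with u hu hune
      rcases Ne.lt_or_gt hune with hlt | hgt
      · -- u < x₀ - c : eventually indicator is the nice function
        have hg_at : ContinuousAt (fun x => u ^ (β - 1) * g (x - u)) x₀ := by
          apply continuousAt_const.mul
          have hmem : x₀ - u ∈ Ioo (0:ℝ) 1 := ⟨by linarith [hu.1], by linarith [hu.1]⟩
          have hsub : ContinuousAt (fun x : ℝ => x - u) x₀ := by fun_prop
          exact ContinuousAt.comp (hg_cont.continuousAt (Ioo_mem_nhds hmem.1 hmem.2)) hsub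
        apply hg_at.congr
        filter_upwards [eventually_gt_nhds (show u + c < x₀ by linarith)] with x hx
        rw [Set.indicator_of_mem (show u ∈ Ioc (0:ℝ) (x - c) from ⟨hu.1, by linarith⟩)]
      · -- u > x₀ - c : eventually indicator is 0
        apply continuousAt_const.congr
        filter_upwards [eventually_lt_nhds (show x₀ < u + c by linarith)] with x hx
        rw [Set.indicator_of_notMem]
        intro hmem
        exact absurd hmem.2 (by push_neg; linarith)
  -- assemble
  apply (hA.add hB').congr
  filter_upwards [hU] with x hx
  obtain ⟨hcx, hx01⟩ := hxU x hx
  have hII : IntegrableOn (fun t => (x - t) ^ (β - 1) * g t) (Ioc 0 x) :=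
    kmul_int g hg_meas hg_cont hg_int hβ hx01
  have h1 : IntervalIntegrable (fun t => (x - t) ^ (β - 1) * g t) volume 0 c :=
    (intervalIntegrable_iff_integrableOn_Ioc_of_le hc0.le).2
      (hII.mono_set (Ioc_subset_Ioc le_rfl hcx.le))
  have h2 : IntervalIntegrable (fun t => (x - t) ^ (β - 1) * g t) volume c x :=
    (intervalIntegrable_iff_integrableOn_Ioc_of_le hcx.le).2
      (hII.mono_set (Ioc_subset_Ioc hc0.le le_rfl))
  have hsplit := intervalIntegral.integral_add_adjacent_intervals h1 h2
  have hBx : (∫ t in c..x, (x - t) ^ (β - 1) * g t) = B' x := by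
    have hcomp : (∫ t in c..x, (x - t) ^ (β - 1) * g t)
        = ∫ u in (x - x)..(x - c), u ^ (β - 1) * g (x - u) := by
      rw [← intervalIntegral.integral_comp_sub_left (fun u => u ^ (β - 1) * g (x - u)) x]
      congr 1
      ext t
      rw [sub_sub_cancel]
    have hB'app : B' x = ∫ u in Ioc (0:ℝ) Mo,
        (Ioc (0:ℝ) (x - c)).indicator (fun u => u ^ (β - 1) * g (x - u)) u := rfl
    rw [hcomp, sub_self, hB'app, setIntegral_indicator measurableSet_Ioc,
      Set.inter_eq_self_of_subset_right
        (Ioc_subset_Ioc le_rfl (by cases hx; simp only [hMo_def]; linarith)),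
      intervalIntegral.integral_of_le (by linarith : (0:ℝ) ≤ x - c)]
  have hAx : (∫ t in (0:ℝ)..c, (x - t) ^ (β - 1) * g t) = A x := by
    rw [intervalIntegral.integral_of_le hc0.le]
  rw [← hsplit, hAx, hBx]
  rfl
end
section
variable (g : ℝ → ℝ) (hg_meas : Measurable g)
  (hg_cont : ContinuousOn g (Ioo 0 1))
  (hg_int : ∀ r : ℝ, 0 < r → r < 1 → IntegrableOn g (Ioo 0 r) volume)

include hg_meas hg_cont hg_int in
lemma Q_fubini {β x : ℝ} (hβ : 0 < β) (hx : x ∈ Ioo (0:ℝ) 1) :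
    IntegrableOn (fun y => ∫ t in (0:ℝ)..y, (y - t) ^ (β - 1) * g t) (Ioc 0 x) volume ∧
    (∫ y in (0:ℝ)..x, (∫ t in (0:ℝ)..y, (y - t) ^ (β - 1) * g t))
      = (1/β) * ∫ t in (0:ℝ)..x, (x - t) ^ β * g t := by
  set μ := volume.restrict (Ioc (0:ℝ) x) with hμ
  set φ : ℝ → ℝ → ℝ :=
    fun y t => (Ioc t x).indicator (fun y => (y - t) ^ (β - 1)) y * g t with hφ
  -- measurability
  have hmeas : AEStronglyMeasurable (Function.uncurry φ) (μ.prod μ) := by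
    have hS : MeasurableSet {q : ℝ × ℝ | q.2 < q.1 ∧ q.1 ≤ x} :=
      (measurableSet_lt measurable_snd measurable_fst).inter
        (measurableSet_le measurable_fst measurable_const)
    have hker2 : Measurable fun q : ℝ × ℝ => (q.1 - q.2) ^ (β - 1) := by fun_prop
    have heq : Function.uncurry φ = fun p : ℝ × ℝ =>
        ({q : ℝ × ℝ | q.2 < q.1 ∧ q.1 ≤ x}.indicator
          (fun q => (q.1 - q.2) ^ (β - 1)) p) * g p.2 := by
      funext p
      simp only [Function.uncurry, hφ]
      by_cases h : p.2 < p.1 ∧ p.1 ≤ x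
      · rw [Set.indicator_of_mem (show p.1 ∈ Ioc p.2 x from h),
          Set.indicator_of_mem (show p ∈ {q : ℝ × ℝ | q.2 < q.1 ∧ q.1 ≤ x} from h)]
      · rw [Set.indicator_of_notMem (show p.1 ∉ Ioc p.2 x from h),
          Set.indicator_of_notMem (show p ∉ {q : ℝ × ℝ | q.2 < q.1 ∧ q.1 ≤ x} from h)]
    rw [heq]
    exact ((hker2.indicator hS).mul (hg_meas.comp measurable_snd)).aestronglyMeasurable
  -- kernel integral evaluation
  have hker_int_eval : ∀ t ∈ Ioc (0:ℝ) x,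
      (∫ y in Ioc (0:ℝ) x, (Ioc t x).indicator (fun y => (y - t) ^ (β - 1)) y)
        = (x - t) ^ β / β := by
    intro t ht
    rw [setIntegral_indicator measurableSet_Ioc,
      Set.inter_eq_self_of_subset_right (Ioc_subset_Ioc ht.1.le le_rfl),
      ← intervalIntegral.integral_of_le ht.2, ker_integral' hβ ht.2]
  -- sections integrable
  have hsec : ∀ᵐ t ∂μ, Integrable (fun y => φ y t) μ := by
    filter_upwards [ae_restrict_mem measurableSet_Ioc] with t ht
    have h1 := (((ker_intOn' hβ ht.2).integrable_indicator
        measurableSet_Ioc).restrict (s := Ioc (0:ℝ) x)).mul_const (g t)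
    exact h1
  -- norm integral integrable
  have habs_int : Integrable (fun t => (x - t) ^ β / β * |g t|) μ := by
    have h1 : IntegrableOn (fun t => (x - t) ^ ((β + 1) - 1) * |g t|) (Ioc 0 x) :=
      kmul_int (fun t => |g t|) hg_meas.abs (hg_cont.abs)
        (fun r h1 h2 => (hg_int r h1 h2).abs) (by linarith) hx
    have h2 : IntegrableOn (fun t => (1/β) * ((x - t) ^ β * |g t|)) (Ioc 0 x) := by
      apply Integrable.const_mul
      simpa [add_sub_cancel_right, IntegrableOn] using h1
    apply h2.congr
    filter_upwards with t
    ring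
  have hnorm : Integrable (fun t => ∫ y, ‖φ y t‖ ∂μ) μ := by
    apply habs_int.congr
    filter_upwards [ae_restrict_mem measurableSet_Ioc] with t ht
    have h1 : (fun y => ‖φ y t‖)
        = fun y => (Ioc t x).indicator (fun y => (y - t) ^ (β - 1)) y * |g t| := by
      funext y
      simp only [hφ, norm_mul, Real.norm_eq_abs]
      congr 1
      by_cases h : y ∈ Ioc t x
      · rw [Set.indicator_of_mem h]
        exact abs_of_nonneg (Real.rpow_nonneg (sub_nonneg.2 h.1.le) _)
      · rw [Set.indicator_of_notMem h]
        exact abs_zero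
    rw [h1, MeasureTheory.integral_mul_const, hμ, hker_int_eval t ht]
  -- product integrability
  have hInt : Integrable (Function.uncurry φ) (μ.prod μ) := by
    rw [integrable_prod_iff' hmeas]
    exact ⟨hsec, hnorm⟩
  -- inner integral identification
  have hinner : ∀ y ∈ Ioc (0:ℝ) x,
      (∫ t, φ y t ∂μ) = ∫ t in (0:ℝ)..y, (y - t) ^ (β - 1) * g t := by
    intro y hy
    have h1 : (fun t => φ y t)
        = (Iio y).indicator (fun t => (y - t) ^ (β - 1) * g t) := by
      funext t
      by_cases h : t < y
      · rw [hφ]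
        simp only
        rw [Set.indicator_of_mem (show y ∈ Ioc t x from ⟨h, hy.2⟩),
          Set.indicator_of_mem (show t ∈ Iio y from h)]
      · rw [hφ]
        simp only
        rw [Set.indicator_of_notMem (show y ∉ Ioc t x from fun hm => h hm.1),
          Set.indicator_of_notMem (show t ∉ Iio y from h), zero_mul]
    have h2 : Ioc (0:ℝ) x ∩ Iio y = Ioo 0 y := by
      ext t
      constructor
      · rintro ⟨⟨h1', _⟩, h3⟩; exact ⟨h1', h3⟩
      · rintro ⟨h1', h2'⟩; exact ⟨⟨h1', (le_of_lt h2').trans hy.2⟩, h2'⟩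
    rw [h1, hμ, setIntegral_indicator measurableSet_Iio, h2,
      ← integral_Ioc_eq_integral_Ioo, ← intervalIntegral.integral_of_le hy.1.le]
  -- outer integral identification
  have houter : ∀ t ∈ Ioc (0:ℝ) x,
      (∫ y, φ y t ∂μ) = (x - t) ^ β / β * g t := by
    intro t ht
    rw [hφ]
    simp only
    rw [MeasureTheory.integral_mul_const, hμ, hker_int_eval t ht]
  constructor
  · have h0 := hInt.integral_prod_left
    apply h0.congr
    filter_upwards [ae_restrict_mem measurableSet_Ioc] with y hy
    exact hinner y hy
  · have hswap := integral_integral_swap hInt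
    calc (∫ y in (0:ℝ)..x, (∫ t in (0:ℝ)..y, (y - t) ^ (β - 1) * g t))
        = ∫ y, (∫ t, φ y t ∂μ) ∂μ := by
          rw [intervalIntegral.integral_of_le hx.1.le]
          exact (setIntegral_congr_fun measurableSet_Ioc
            (fun y hy => (hinner y hy).symm))
      _ = ∫ t, (∫ y, φ y t ∂μ) ∂μ := hswap
      _ = ∫ t in Ioc (0:ℝ) x, (x - t) ^ β / β * g t := by
          exact setIntegral_congr_fun measurableSet_Ioc houter
      _ = (1/β) * ∫ t in (0:ℝ)..x, (x - t) ^ β * g t := by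
          rw [intervalIntegral.integral_of_le hx.1.le, ← MeasureTheory.integral_const_mul]
          exact setIntegral_congr_fun measurableSet_Ioc (fun t _ => by ring)
end

lemma ker_hasDeriv {β x : ℝ} (hβ : 0 < β) {t : ℝ} (ht : t < x) :
    HasDerivAt (fun t : ℝ => -((x - t) ^ β / β)) ((x - t) ^ (β - 1)) t := by
  have h1 : HasDerivAt (fun t : ℝ => x - t) (-1) t := (hasDerivAt_id t).const_sub x
  have h2 := h1.rpow_const (p := β) (Or.inl (ne_of_gt (sub_pos.2 ht)))
  have h3 := (h2.div_const β).neg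
  have heq : -(-1 * β * (x - t) ^ (β - 1) / β) = (x - t) ^ (β - 1) := by
    field_simp
  rw [heq] at h3
  exact h3

section
variable (g : ℝ → ℝ) (hg_meas : Measurable g)
  (hg_cont : ContinuousOn g (Ioo 0 1))
  (hg_int : ∀ r : ℝ, 0 < r → r < 1 → IntegrableOn g (Ioo 0 r) volume)

include hg_meas hg_cont hg_int in
lemma parts_lemma {β x : ℝ} (hβ : 0 < β) (hx : x ∈ Ioo (0:ℝ) 1) :
    (∫ t in (0:ℝ)..x, (x - t) ^ (β - 1) * (∫ s in (0:ℝ)..t, g s))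
      = (1/β) * ∫ t in (0:ℝ)..x, (x - t) ^ β * g t := by
  obtain ⟨hx0, hx1⟩ := hx
  have hIoc : ∀ t : ℝ, 0 < t → t < 1 → IntegrableOn g (Ioc 0 t) := fun t h0 h1 =>
    (hg_int ((1+t)/2) (by linarith) (by linarith)).mono_set
      (fun s hs => ⟨hs.1, by rcases hs with ⟨_, h2⟩; linarith⟩)
  set F : ℝ → ℝ := fun t => ∫ s in (0:ℝ)..t, g s with hF_def
  have hF_cont : ContinuousOn F (Icc 0 x) := by
    apply (continuousOn_primitive (f := g) (a := 0) (b := x)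
      ((integrableOn_Icc_iff_integrableOn_Ioc (by finiteness)).2 (hIoc x hx0 hx1))).congr
    intro t ht
    rw [hF_def]
    exact intervalIntegral.integral_of_le ht.1
  set Φ : ℝ → ℝ := fun t => -((x - t) ^ β / β) * F t with hΦ_def
  have hΦ_cont : ContinuousOn Φ (Icc 0 x) := by
    apply ContinuousOn.mul _ hF_cont
    exact ((((continuous_const.sub continuous_id).continuousOn).rpow_const
      (fun t _ => Or.inr hβ.le)).div_const β).neg
  have hderiv : ∀ t ∈ Ioo (0:ℝ) x, HasDerivWithinAt Φ
      ((x - t) ^ (β - 1) * F t + (-((x - t) ^ β / β)) * g t) (Ioi t) t := by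
    intro t ht
    have hF' : HasDerivAt F (g t) t := by
      apply intervalIntegral.integral_hasDerivAt_right
      · exact (intervalIntegrable_iff_integrableOn_Ioc_of_le ht.1.le).2
          ((hIoc x hx0 hx1).mono_set (Ioc_subset_Ioc le_rfl ht.2.le))
      · exact ⟨Ioo 0 1, Ioo_mem_nhds ht.1 (lt_trans ht.2 hx1),
          hg_meas.aestronglyMeasurable.restrict⟩
      · exact hg_cont.continuousAt (Ioo_mem_nhds ht.1 (lt_trans ht.2 hx1))
    exact ((ker_hasDeriv hβ ht.2).mul hF').hasDerivWithinAt
  have hint1 : IntervalIntegrable (fun t => (x - t) ^ (β - 1) * F t) volume 0 x :=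
    (intervalIntegrable_iff_integrableOn_Ioc_of_le hx0.le).2 (kmulC_int hβ hx0.le F hF_cont)
  have hint2 : IntervalIntegrable (fun t => (-((x - t) ^ β / β)) * g t) volume 0 x := by
    have h1 : IntegrableOn (fun t => (x - t) ^ ((β+1) - 1) * g t) (Ioc 0 x) :=
      kmul_int g hg_meas hg_cont hg_int (by linarith) ⟨hx0, hx1⟩
    have h2 : IntegrableOn (fun t => (-(1/β)) * ((x - t) ^ β * g t)) (Ioc 0 x) := by
      apply Integrable.const_mul
      simpa [add_sub_cancel_right, IntegrableOn] using h1
    apply (intervalIntegrable_iff_integrableOn_Ioc_of_le hx0.le).2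
    apply h2.congr
    filter_upwards with t
    ring
  have hFTC := intervalIntegral.integral_eq_sub_of_hasDeriv_right_of_le hx0.le hΦ_cont
    hderiv (hint1.add hint2)
  have hΦx : Φ x = 0 := by
    rw [hΦ_def]
    simp [Real.zero_rpow hβ.ne']
  have hΦ0 : Φ 0 = 0 := by
    rw [hΦ_def]
    simp [hF_def]
  rw [intervalIntegral.integral_add hint1 hint2, hΦx, hΦ0, sub_zero] at hFTC
  have h3 : (∫ t in (0:ℝ)..x, (-((x - t) ^ β / β)) * g t)
      = -(1/β) * ∫ t in (0:ℝ)..x, (x - t) ^ β * g t := by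
    rw [← intervalIntegral.integral_const_mul]
    congr 1
    funext t
    ring
  rw [h3] at hFTC
  linarith [hFTC]
end

/-- The Riemann--Liouville fractional integral of order `α`. -/
noncomputable def rlInt (α : ℝ) (f : ℝ → ℝ) (x : ℝ) : ℝ :=
  (1 / Real.Gamma α) * ∫ t in (0:ℝ)..x, (x - t) ^ (α - 1) * f t

theorem deriv_rlInt (α : ℝ) (hα : 0 < α) (f : ℝ → ℝ)
    (hf_smooth : ContDiffOn ℝ 1 f (Set.Ioo 0 1))
    (hf'_int : ∀ r : ℝ, 0 < r → r < 1 →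
      IntegrableOn (deriv f) (Set.Ioo 0 r) volume) :
    ∃ L : ℝ, Filter.Tendsto f (nhdsWithin 0 (Set.Ioi 0)) (nhds L) ∧
      ContDiffOn ℝ 1 (rlInt α f) (Set.Ioo 0 1) ∧
      ∀ x ∈ Set.Ioo (0:ℝ) 1,
        deriv (rlInt α f) x
          = (L / Real.Gamma α) * x ^ (α - 1) + rlInt α (deriv f) x := by
  set g := deriv f with hg_def
  have hg_meas : Measurable g := measurable_deriv f
  have hg_cont : ContinuousOn g (Ioo 0 1) :=
    hf_smooth.continuousOn_deriv_of_isOpen isOpen_Ioo (le_refl 1)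
  have hg_int : ∀ r : ℝ, 0 < r → r < 1 → IntegrableOn g (Ioo 0 r) volume := hf'_int
  have hd : ∀ t ∈ Ioo (0:ℝ) 1, HasDerivAt f (g t) t := fun t ht =>
    ((hf_smooth.differentiableOn one_ne_zero t ht).differentiableAt
      (Ioo_mem_nhds ht.1 ht.2)).hasDerivAt
  have hIoc : ∀ t : ℝ, 0 < t → t < 1 → IntegrableOn g (Ioc 0 t) := fun t h0 h1 =>
    (hg_int ((1+t)/2) (by linarith) (by linarith)).mono_set
      (fun s hs => ⟨hs.1, by rcases hs with ⟨_, h2⟩; linarith⟩)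
  have hII : ∀ t : ℝ, 0 ≤ t → t < 1 → IntervalIntegrable g volume 0 t := by
    intro t h0 h1
    rcases eq_or_lt_of_le h0 with h | h
    · rw [← h]
    · exact (intervalIntegrable_iff_integrableOn_Ioc_of_le h0).2 (hIoc t h h1)
  set F : ℝ → ℝ := fun t => ∫ s in (0:ℝ)..t, g s with hF_def
  set L : ℝ := f 2⁻¹ - F 2⁻¹ with hL_def
  have hrep : ∀ t ∈ Ioo (0:ℝ) 1, f t = L + F t := by
    intro t ht
    have huIcc : uIcc (2⁻¹:ℝ) t ⊆ Ioo 0 1 := by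
      intro s hs
      rcases hs with ⟨hs1, hs2⟩
      constructor
      · exact lt_of_lt_of_le (lt_min (by norm_num) ht.1) hs1
      · exact lt_of_le_of_lt hs2 (max_lt (by norm_num) ht.2)
    have hFTC : ∫ s in (2⁻¹:ℝ)..t, g s = f t - f 2⁻¹ :=
      intervalIntegral.integral_eq_sub_of_hasDerivAt (fun s hs => hd s (huIcc hs))
        ((hg_cont.mono huIcc).intervalIntegrable)
    have hadd : F 2⁻¹ + ∫ s in (2⁻¹:ℝ)..t, g s = F t :=
      intervalIntegral.integral_add_adjacent_intervals (hII 2⁻¹ (by norm_num) (by norm_num))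
        (((hII 2⁻¹ (by norm_num) (by norm_num)).symm).trans (hII t ht.1.le ht.2))
    rw [hL_def]
    linarith [hFTC, hadd]
  have hlim : Tendsto f (nhdsWithin 0 (Ioi 0)) (nhds L) := by
    have hψ : ContinuousOn (fun y => ∫ t in Ioc (0:ℝ) y, g t) (Icc 0 2⁻¹) :=
      continuousOn_primitive ((integrableOn_Icc_iff_integrableOn_Ioc (by finiteness)).2
        (hIoc 2⁻¹ (by norm_num) (by norm_num)))
    have hψ0 : (∫ t in Ioc (0:ℝ) (0:ℝ), g t) = 0 := by simp
    have hmem : Icc (0:ℝ) 2⁻¹ ∈ nhdsWithin (0:ℝ) (Ioi 0) :=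
      mem_of_superset (Ioo_mem_nhdsGT_of_mem (by norm_num : (0:ℝ) ∈ Ico (0:ℝ) 2⁻¹))
        Ioo_subset_Icc_self
    have ht1 : Tendsto (fun y => ∫ t in Ioc (0:ℝ) y, g t) (nhdsWithin 0 (Ioi 0)) (nhds 0) := by
      have h := ((hψ 0 ⟨le_rfl, by norm_num⟩).tendsto).mono_left (nhdsWithin_le_iff.2 hmem)
      rw [hψ0] at h
      exact h
    have ht2 : Tendsto F (nhdsWithin 0 (Ioi 0)) (nhds 0) := by
      apply ht1.congr'
      filter_upwards [self_mem_nhdsWithin] with y hy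
      rw [hF_def]
      exact (intervalIntegral.integral_of_le (le_of_lt hy)).symm
    have ht3 : Tendsto (fun t => L + F t) (nhdsWithin 0 (Ioi 0)) (nhds L) := by
      have := tendsto_const_nhds (x := L) (f := nhdsWithin (0:ℝ) (Ioi 0)) |>.add ht2
      simpa using this
    apply ht3.congr'
    filter_upwards [Ioo_mem_nhdsGT_of_mem (by norm_num : (0:ℝ) ∈ Ico (0:ℝ) 1)] with t ht
    exact (hrep t ht).symm
  set Q1 : ℝ → ℝ := fun y => ∫ t in (0:ℝ)..y, (y - t) ^ (α - 1) * g t with hQ1_def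
  have hQ1cont : ∀ x ∈ Ioo (0:ℝ) 1, ContinuousAt Q1 x := fun x hx =>
    Q_contAt g hg_meas hg_cont hg_int hα hx
  have hfub : ∀ x ∈ Ioo (0:ℝ) 1, IntegrableOn Q1 (Ioc 0 x) volume ∧
      (∫ y in (0:ℝ)..x, Q1 y) = (1/α) * ∫ t in (0:ℝ)..x, (x - t) ^ α * g t := fun x hx =>
    Q_fubini g hg_meas hg_cont hg_int hα hx
  have hrlrep : ∀ x ∈ Ioo (0:ℝ) 1, rlInt α f x
      = (1 / Real.Gamma α) * (L * (x ^ α / α)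
        + (1/α) * ∫ t in (0:ℝ)..x, (x - t) ^ α * g t) := by
    intro x hx
    have hF_cont : ContinuousOn F (Icc 0 x) := by
      apply (continuousOn_primitive (f := g) (a := 0) (b := x)
        ((integrableOn_Icc_iff_integrableOn_Ioc (by finiteness)).2 (hIoc x hx.1 hx.2))).congr
      intro t ht
      rw [hF_def]
      exact intervalIntegral.integral_of_le ht.1
    have h1 : IntegrableOn (fun t => (x - t) ^ (α - 1) * L) (Ioc 0 x) :=
      (ker_intOn hα hx.1.le).mul_const L
    have h2 : IntegrableOn (fun t => (x - t) ^ (α - 1) * F t) (Ioc 0 x) :=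
      kmulC_int hα hx.1.le F hF_cont
    have hsplit : (∫ t in (0:ℝ)..x, (x - t) ^ (α - 1) * f t)
        = (∫ t in (0:ℝ)..x, (x - t) ^ (α - 1) * L)
          + ∫ t in (0:ℝ)..x, (x - t) ^ (α - 1) * F t := by
      rw [intervalIntegral.integral_of_le hx.1.le, intervalIntegral.integral_of_le hx.1.le,
        intervalIntegral.integral_of_le hx.1.le, ← integral_add h1 h2]
      apply setIntegral_congr_fun measurableSet_Ioc
      intro t ht
      show (x - t) ^ (α - 1) * f t = (x - t) ^ (α - 1) * L + (x - t) ^ (α - 1) * F t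
      rw [hrep t ⟨ht.1, lt_of_le_of_lt ht.2 hx.2⟩]
      ring
    have hconst : (∫ t in (0:ℝ)..x, (x - t) ^ (α - 1) * L) = L * (x ^ α / α) := by
      rw [intervalIntegral.integral_mul_const, ker_integral hα hx.1.le, sub_zero]
      ring
    have hparts := parts_lemma g hg_meas hg_cont hg_int hα hx
    rw [rlInt, hsplit, hconst, hparts]
  have hQ1II : ∀ x ∈ Ioo (0:ℝ) 1, IntervalIntegrable Q1 volume 0 x := fun x hx =>
    (intervalIntegrable_iff_integrableOn_Ioc_of_le hx.1.le).2 (hfub x hx).1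
  have hQ1contOn : ContinuousOn Q1 (Ioo 0 1) := fun x hx =>
    (hQ1cont x hx).continuousWithinAt
  have hmain : ∀ x ∈ Ioo (0:ℝ) 1, HasDerivAt (rlInt α f)
      ((1 / Real.Gamma α) * (L * x ^ (α - 1) + Q1 x)) x := by
    intro x hx
    have h1 : HasDerivAt (fun y : ℝ => y ^ α) (α * x ^ (α - 1)) x :=
      Real.hasDerivAt_rpow_const (Or.inl hx.1.ne')
    have h2 : HasDerivAt (fun y => ∫ z in (0:ℝ)..y, Q1 z) (Q1 x) x :=
      intervalIntegral.integral_hasDerivAt_right (hQ1II x hx)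
        ⟨Ioo 0 1, Ioo_mem_nhds hx.1 hx.2,
          hQ1contOn.aestronglyMeasurable measurableSet_Ioo⟩ (hQ1cont x hx)
    have hG : HasDerivAt (fun y => (1 / Real.Gamma α)
        * (L * (y ^ α / α) + ∫ z in (0:ℝ)..y, Q1 z))
        ((1 / Real.Gamma α) * (L * x ^ (α - 1) + Q1 x)) x := by
      have h3 := (((h1.div_const α).const_mul L).add h2).const_mul (1 / Real.Gamma α)
      rw [mul_div_cancel_left₀ _ hα.ne'] at h3
      exact h3
    apply hG.congr_of_eventuallyEq
    filter_upwards [Ioo_mem_nhds hx.1 hx.2] with y hy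
    rw [hrlrep y hy, ← (hfub y hy).2]
  refine ⟨L, hlim, ?_, ?_⟩
  · rw [show (1 : WithTop ℕ∞) = 0 + 1 by norm_num, contDiffOn_succ_iff_deriv_of_isOpen isOpen_Ioo]
    refine ⟨fun x hx => ((hmain x hx).differentiableAt).differentiableWithinAt, ?_, ?_⟩
    · intro h
      simp at h
    · rw [contDiffOn_zero]
      have hform : ContinuousOn (fun x => (1 / Real.Gamma α) * (L * x ^ (α - 1) + Q1 x))
          (Ioo (0:ℝ) 1) := by
        apply continuousOn_const.mul
        apply ContinuousOn.add
        · apply continuousOn_const.mul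
          exact ContinuousOn.rpow_const continuousOn_id (fun x hx => Or.inl hx.1.ne')
        · exact hQ1contOn
      exact hform.congr (fun x hx => (hmain x hx).deriv)
  · intro x hx
    rw [(hmain x hx).deriv, rlInt, hQ1_def]
    ring
end

section
/- Let α > 0. Suppose f is n-times continuously differentiable on (0,1) for every n ≥ 1, and for every n ≥ 1 the n-fold iterate δⁿf of the operator (δg)(x) = x g′(x) is integrable on (0,r) for every 0 < r < 1. Then I^α[f] is n-times differentiable on (0,1) for every n ≥ 1, and for each n ≥ 1 and each x in (0,1), the n-th derivative satisfies (dⁿ/dxⁿ) I^α[f](x) = (1/xⁿ) · I^α[pₙ(α + δ) f](x), where pₙ(t) = t(t−1)⋯(t−n+1) and pₙ(α + δ) f means the polynomial pₙ applied to the operator (α·Id + δ) acting on f. -/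
open MeasureTheory Real Set Filter

/-- The operator `δ`, `(δf)(x) = x f'(x)`. -/
noncomputable def deltaOp (f : ℝ → ℝ) : ℝ → ℝ := fun x => x * deriv f x

/-- `pApply α n f = pₙ(α + δ) f` where `pₙ(t) = t (t-1) ⋯ (t-n+1)`,
applied to the operator `α • Id + δ`. -/
noncomputable def pApply (α : ℝ) : ℕ → (ℝ → ℝ) → (ℝ → ℝ)
  | 0, f => f
  | n + 1, f => fun x =>
      (α - n) * pApply α n f x + deltaOp (pApply α n f) x

open intervalIntegral ContDiff

/-- integral without Gamma factor -/
noncomputable def Fi (α : ℝ) (g : ℝ → ℝ) (x : ℝ) : ℝ :=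
  ∫ t in (0:ℝ)..x, (x - t) ^ (α - 1) * g t

/-- good functions -/
def Good (g : ℝ → ℝ) : Prop :=
  ContDiffOn ℝ ∞ g (Set.Ioo 0 1) ∧
  ∀ n : ℕ, ∀ r : ℝ, 0 < r → r < 1 → IntegrableOn (deltaOp^[n] g) (Set.Ioo 0 r) volume

lemma Good.smooth {g : ℝ → ℝ} (h : Good g) : ContDiffOn ℝ ∞ g (Set.Ioo 0 1) := h.1

lemma Good.int0 {g : ℝ → ℝ} (h : Good g) {r : ℝ} (h0 : 0 < r) (h1 : r < 1) :
    IntegrableOn g (Set.Ioo 0 r) volume := by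
  simpa using h.2 0 r h0 h1

lemma Good.cont {g : ℝ → ℝ} (h : Good g) : ContinuousOn g (Set.Ioo 0 1) :=
  h.1.continuousOn

lemma Good.diffAt {g : ℝ → ℝ} (h : Good g) {x : ℝ} (hx : x ∈ Set.Ioo (0:ℝ) 1) :
    DifferentiableAt ℝ g x :=
  ((h.1.contDiffAt (isOpen_Ioo.mem_nhds hx)).differentiableAt (by simp))

lemma smooth_deriv {g : ℝ → ℝ} (h : ContDiffOn ℝ ∞ g (Set.Ioo 0 1)) :
    ContDiffOn ℝ ∞ (deriv g) (Set.Ioo 0 1) :=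
  ((contDiffOn_infty_iff_deriv_of_isOpen isOpen_Ioo).1 h).2

lemma Good.smooth_delta {g : ℝ → ℝ} (h : ContDiffOn ℝ ∞ g (Set.Ioo 0 1)) :
    ContDiffOn ℝ ∞ (deltaOp g) (Set.Ioo 0 1) := by
  have : ContDiffOn ℝ ∞ (fun x : ℝ => x) (Set.Ioo 0 1) := contDiffOn_id
  exact this.mul (smooth_deriv h)

lemma Good.delta {g : ℝ → ℝ} (h : Good g) : Good (deltaOp g) := by
  refine ⟨Good.smooth_delta h.1, fun n r h0 h1 => ?_⟩
  have : deltaOp^[n] (deltaOp g) = deltaOp^[n+1] g := by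
    rw [Function.iterate_succ_apply]
  rw [this]
  exact h.2 (n+1) r h0 h1

lemma Good.contDelta {g : ℝ → ℝ} (h : Good g) : ContinuousOn (deltaOp g) (Set.Ioo 0 1) :=
  (Good.smooth_delta h.1).continuousOn


lemma deltaIter_congr {F G : ℝ → ℝ} (h : ∀ x ∈ Set.Ioo (0:ℝ) 1, F x = G x) :
    ∀ n : ℕ, ∀ x ∈ Set.Ioo (0:ℝ) 1, deltaOp^[n] F x = deltaOp^[n] G x := by
  intro n
  induction n with
  | zero => simpa using h
  | succ n ih =>
    intro x hx
    rw [Function.iterate_succ_apply', Function.iterate_succ_apply']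
    have : deriv (deltaOp^[n] F) x = deriv (deltaOp^[n] G) x := by
      apply Filter.EventuallyEq.deriv_eq
      filter_upwards [isOpen_Ioo.mem_nhds hx] with y hy using ih y hy
    simp [deltaOp, this]

lemma deltaIter_add {g h : ℝ → ℝ} (hg : ContDiffOn ℝ ∞ g (Set.Ioo 0 1))
    (hh : ContDiffOn ℝ ∞ h (Set.Ioo 0 1)) (c : ℝ) :
    ∀ n : ℕ, ∀ x ∈ Set.Ioo (0:ℝ) 1,
      deltaOp^[n] (fun y => c * g y + h y) x = c * deltaOp^[n] g x + deltaOp^[n] h x := by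
  intro n
  induction n generalizing g h with
  | zero => intro x _; simp
  | succ n ih =>
    intro x hx
    rw [Function.iterate_succ_apply]
    have e1 : ∀ y ∈ Set.Ioo (0:ℝ) 1,
        deltaOp (fun y => c * g y + h y) y = (fun y => c * deltaOp g y + deltaOp h y) y := by
      intro y hy
      have hgd : DifferentiableAt ℝ g y :=
        (hg.contDiffAt (isOpen_Ioo.mem_nhds hy)).differentiableAt (by simp)
      have hhd : DifferentiableAt ℝ h y :=
        (hh.contDiffAt (isOpen_Ioo.mem_nhds hy)).differentiableAt (by simp)
      have : deriv (fun y => c * g y + h y) y = c * deriv g y + deriv h y := by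
        rw [deriv_fun_add (hgd.const_mul c) hhd, deriv_const_mul c hgd]
      simp only [deltaOp, this]; ring
    have e2 := deltaIter_congr e1 n x hx
    rw [e2, ih (Good.smooth_delta hg) (Good.smooth_delta hh) x hx,
      ← Function.iterate_succ_apply, ← Function.iterate_succ_apply]

lemma Good.combo {g h : ℝ → ℝ} (hg : Good g) (hh : Good h) (c : ℝ) :
    Good (fun y => c * g y + h y) := by
  refine ⟨(contDiffOn_const.mul hg.1).add hh.1, fun n r h0 h1 => ?_⟩
  have : ∀ x ∈ Set.Ioo (0:ℝ) r,
      deltaOp^[n] (fun y => c * g y + h y) x = c * deltaOp^[n] g x + deltaOp^[n] h x :=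
    fun x hx => deltaIter_add hg.1 hh.1 c n x ⟨hx.1, hx.2.trans h1⟩
  have hi : IntegrableOn (fun x => c * deltaOp^[n] g x + deltaOp^[n] h x) (Set.Ioo 0 r) volume :=
    ((hg.2 n r h0 h1).const_mul c).add (hh.2 n r h0 h1)
  exact hi.congr_fun (fun x hx => (this x hx).symm) measurableSet_Ioo

lemma rpow_max_bound {m M v e : ℝ} (hm : 0 < m) (h1 : m ≤ v) (h2 : v ≤ M) :
    v ^ e ≤ max (m ^ e) (M ^ e) := by
  rcases le_or_gt 0 e with he | he
  · exact le_max_of_le_right (Real.rpow_le_rpow (hm.le.trans h1) h2 he)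
  · exact le_max_of_le_left (Real.rpow_le_rpow_of_nonpos hm h1 he.le)

lemma intervalIntegrable_rpow_kernel {α : ℝ} (hα : 0 < α) {a b : ℝ} (hab : a ≤ b) :
    IntervalIntegrable (fun t => (b - t) ^ (α - 1)) volume a b := by
  have h0 : IntervalIntegrable (fun t : ℝ => t ^ (α - 1)) volume 0 (b - a) :=
    intervalIntegrable_rpow' (by linarith)
  have := h0.comp_sub_left b
  simpa using this.symm

lemma integrableOn_kernel_mul {α : ℝ} (hα : 0 < α) {g : ℝ → ℝ}
    (hc : ContinuousOn g (Set.Ioo 0 1))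
    (hint : ∀ r : ℝ, 0 < r → r < 1 → IntegrableOn g (Set.Ioo 0 r) volume)
    {x : ℝ} (hx : x ∈ Set.Ioo (0:ℝ) 1) :
    IntervalIntegrable (fun t => (x - t) ^ (α - 1) * g t) volume 0 x := by
  obtain ⟨hx0, hx1⟩ := hx
  rw [intervalIntegrable_iff_integrableOn_Ioc_of_le hx0.le]
  have hsplit : Set.Ioc (0:ℝ) (x/2) ∪ Set.Ioc (x/2) x = Set.Ioc 0 x :=
    Set.Ioc_union_Ioc_eq_Ioc (by linarith) (by linarith)
  rw [← hsplit]
  apply MeasureTheory.IntegrableOn.union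
  · -- far from the singularity: kernel bounded, g integrable
    have hgint : IntegrableOn g (Set.Ioc 0 (x/2)) volume :=
      (hint x hx0 hx1).mono_set (fun t ht => ⟨ht.1, lt_of_le_of_lt ht.2 (by linarith)⟩)
    have hker_meas : AEStronglyMeasurable (fun t => (x - t) ^ (α - 1))
        (volume.restrict (Set.Ioc 0 (x/2))) := by
      apply ContinuousOn.aestronglyMeasurable _ measurableSet_Ioc
      apply (continuousOn_const.sub continuousOn_id).rpow_const
      intro s hs
      left
      simp only [Pi.sub_apply, id]
      obtain ⟨hs1, hs2⟩ := hs
      intro hcontra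
      linarith
    exact hgint.bdd_mul hker_meas (by
      rw [ae_restrict_iff' measurableSet_Ioc]
      filter_upwards with t ht
      have h1 : x/2 ≤ x - t := by cases ht; linarith
      have h2 : x - t ≤ x := by cases ht; linarith
      rw [Real.norm_eq_abs, abs_of_nonneg (Real.rpow_nonneg (by linarith) _)]
      exact rpow_max_bound (by linarith) h1 h2)
  · -- near the singularity: kernel integrable, g bounded
    have hker : IntegrableOn (fun t => (x - t) ^ (α - 1)) (Set.Ioc (x/2) x) volume := by
      have := intervalIntegrable_rpow_kernel hα (a := x/2) (b := x) (by linarith)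
      rwa [intervalIntegrable_iff_integrableOn_Ioc_of_le (by linarith)] at this
    have hsub : Set.Icc (x/2) x ⊆ Set.Ioo (0:ℝ) 1 :=
      fun t ht => ⟨lt_of_lt_of_le (by linarith) ht.1, lt_of_le_of_lt ht.2 hx1⟩
    obtain ⟨C, hC⟩ := isCompact_Icc.exists_bound_of_continuousOn (hc.mono hsub)
    have hgmeas : AEStronglyMeasurable g (volume.restrict (Set.Ioc (x/2) x)) :=
      (hc.mono (fun t ht => hsub ⟨ht.1.le, ht.2⟩)).aestronglyMeasurable measurableSet_Ioc
    have h2 : IntegrableOn (fun t => g t * (x - t) ^ (α - 1)) (Set.Ioc (x/2) x) volume :=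
      hker.bdd_mul hgmeas (by
        rw [ae_restrict_iff' measurableSet_Ioc]
        filter_upwards with t ht
        exact hC t ⟨ht.1.le, ht.2⟩)
    exact h2.congr_fun (fun t _ => mul_comm _ _) measurableSet_Ioc

lemma Fi_scale {α : ℝ} (g : ℝ → ℝ) {x : ℝ} (hx : 0 < x) :
    Fi α g x = x ^ α * ∫ s in (0:ℝ)..1, (1 - s) ^ (α - 1) * g (x * s) := by
  have h1 := intervalIntegral.integral_comp_mul_left
    (fun t => (x - t) ^ (α - 1) * g t) (a := 0) (b := 1) hx.ne'
  simp only [mul_zero, mul_one] at h1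
  have h2 : Fi α g x = x • ∫ s in (0:ℝ)..1, (x - x * s) ^ (α - 1) * g (x * s) := by
    rw [h1, smul_smul, mul_inv_cancel₀ hx.ne', one_smul]; rfl
  rw [h2]
  have h3 : ∫ s in (0:ℝ)..1, (x - x * s) ^ (α - 1) * g (x * s)
      = ∫ s in (0:ℝ)..1, x ^ (α - 1) * ((1 - s) ^ (α - 1) * g (x * s)) := by
    apply intervalIntegral.integral_congr
    intro s hs
    rw [Set.uIcc_of_le (by norm_num : (0:ℝ) ≤ 1)] at hs
    show (x - x * s) ^ (α - 1) * g (x * s) = x ^ (α - 1) * ((1 - s) ^ (α - 1) * g (x * s))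
    rw [show x - x * s = x * (1 - s) by ring,
      Real.mul_rpow hx.le (by linarith [hs.2]), mul_assoc]
  rw [h3, intervalIntegral.integral_const_mul, smul_eq_mul, ← mul_assoc]
  congr 1
  rw [mul_comm, ← Real.rpow_add_one hx.ne']
  norm_num

lemma intervalIntegrable_kernel_s {α : ℝ} (hα : 0 < α) {g : ℝ → ℝ}
    (hc : ContinuousOn g (Set.Ioo 0 1))
    (hint : ∀ r : ℝ, 0 < r → r < 1 → IntegrableOn g (Set.Ioo 0 r) volume)
    {x : ℝ} (hx : x ∈ Set.Ioo (0:ℝ) 1) :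
    IntervalIntegrable (fun s => (1 - s) ^ (α - 1) * g (x * s)) volume 0 1 := by
  have h1 := (integrableOn_kernel_mul hα hc hint hx).comp_mul_left (c := x)
  rw [zero_div, div_self hx.1.ne'] at h1
  rw [intervalIntegrable_iff_integrableOn_Ioc_of_le zero_le_one] at h1 ⊢
  have h2 : IntegrableOn (fun s => x ^ (α - 1) * ((1 - s) ^ (α - 1) * g (x * s)))
      (Set.Ioc 0 1) volume := by
    apply h1.congr_fun _ measurableSet_Ioc
    intro s hs
    have : x - x * s = x * (1 - s) := by ring
    simp only [this, Real.mul_rpow hx.1.le (by linarith [hs.2] : (0:ℝ) ≤ 1 - s), mul_assoc]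
  have h3 : IntegrableOn
      (fun s => (x ^ (α - 1))⁻¹ * (x ^ (α - 1) * ((1 - s) ^ (α - 1) * g (x * s))))
      (Set.Ioc 0 1) volume := h2.const_mul (x ^ (α - 1))⁻¹
  apply h3.congr_fun _ measurableSet_Ioc
  intro s _
  show (x ^ (α - 1))⁻¹ * (x ^ (α - 1) * ((1 - s) ^ (α - 1) * g (x * s)))
      = (1 - s) ^ (α - 1) * g (x * s)
  rw [← mul_assoc, inv_mul_cancel₀ (Real.rpow_pos_of_pos hx.1 _).ne', one_mul]

lemma intervalIntegrable_comp_mul {h : ℝ → ℝ}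
    (hint : ∀ r : ℝ, 0 < r → r < 1 → IntegrableOn h (Set.Ioo 0 r) volume)
    {u b : ℝ} (hu : 0 < u) (hub : u ≤ b) (hb : b < 1) :
    IntervalIntegrable (fun s => h (u * s)) volume 0 (1/2) := by
  have h1 : IntervalIntegrable h volume 0 (u/2) := by
    rw [intervalIntegrable_iff_integrableOn_Ioc_of_le (by linarith)]
    exact (hint b (by linarith) hb).mono_set
      (fun t ht => ⟨ht.1, lt_of_le_of_lt ht.2 (by linarith)⟩)
  have h2 := h1.comp_mul_left (c := u)
  rw [zero_div] at h2
  rwa [show u / 2 / u = 1/2 by field_simp] at h2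

lemma norm_integrand_integrableOn {α : ℝ} (hα : 0 < α) {h : ℝ → ℝ}
    (hc : ContinuousOn h (Set.Ioo 0 1))
    (hint : ∀ r : ℝ, 0 < r → r < 1 → IntegrableOn h (Set.Ioo 0 r) volume)
    {u : ℝ} (hu : u ∈ Set.Ioo (0:ℝ) 1) :
    IntegrableOn (fun s => (1 - s) ^ (α - 1) * (u ^ (α - 1) * h (u * s)))
      (Set.Ioo 0 1) volume := by
  have h1 := (intervalIntegrable_kernel_s hα hc hint hu).const_mul (u ^ (α - 1))
  rw [intervalIntegrable_iff_integrableOn_Ioc_of_le zero_le_one] at h1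
  have h2 : IntegrableOn (fun s => (1 - s) ^ (α - 1) * (u ^ (α - 1) * h (u * s)))
      (Set.Ioc 0 1) volume := h1.congr_fun (fun s _ => by ring) measurableSet_Ioc
  exact h2.mono_set Set.Ioo_subset_Ioc_self

lemma norm_integral_bound {α : ℝ} (hα : 0 < α) {h : ℝ → ℝ}
    (hc : ContinuousOn h (Set.Ioo 0 1))
    (hint : ∀ r : ℝ, 0 < r → r < 1 → IntegrableOn h (Set.Ioo 0 r) volume)
    {a b : ℝ} (ha : 0 < a) (hab : a ≤ b) (hb : b < 1) :
    ∃ C : ℝ, ∀ u ∈ Set.Icc a b,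
      (∫ s in Set.Ioo (0:ℝ) 1, ‖(1 - s) ^ (α - 1) * (u ^ (α - 1) * h (u * s))‖) ≤ C := by
  set D := max ((1/2:ℝ) ^ (α - 1)) ((1:ℝ) ^ (α - 1)) with hD
  set B := max (a ^ (α - 1)) (b ^ (α - 1)) with hB
  have hD0 : 0 ≤ D := le_max_of_le_right (by norm_num)
  have hB0 : 0 ≤ B := le_max_of_le_left (Real.rpow_nonneg ha.le _)
  obtain ⟨M, hM⟩ := isCompact_Icc.exists_bound_of_continuousOn
    (hc.mono (fun t (ht : t ∈ Set.Icc (a/2) b) => ⟨lt_of_lt_of_le (by linarith) ht.1,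
      lt_of_le_of_lt ht.2 hb⟩))
  have hM0 : 0 ≤ M := le_trans (norm_nonneg _) (hM b ⟨by linarith, le_refl b⟩)
  set c2 : ℝ := ∫ s in Set.Ico (1/2:ℝ) 1, (1 - s) ^ (α - 1) with hc2
  set I0 : ℝ := ∫ t in Set.Ioo (0:ℝ) b, ‖h t‖ with hI0
  refine ⟨D * B * (a⁻¹ * I0) + B * M * c2, fun u hu => ?_⟩
  have hu0 : 0 < u := lt_of_lt_of_le ha hu.1
  have hu1 : u < 1 := lt_of_le_of_lt hu.2 hb
  have hNint : IntegrableOn (fun s => ‖(1 - s) ^ (α - 1) * (u ^ (α - 1) * h (u * s))‖)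
      (Set.Ioo 0 1) volume := (norm_integrand_integrableOn hα hc hint ⟨hu0, hu1⟩).norm
  -- split the integral
  have hsplit : Set.Ioo (0:ℝ) (1/2) ∪ Set.Ico (1/2) 1 = Set.Ioo 0 1 :=
    Set.Ioo_union_Ico_eq_Ioo (by norm_num) (by norm_num)
  have hdisj : Disjoint (Set.Ioo (0:ℝ) (1/2)) (Set.Ico (1/2) 1) := by
    rw [Set.disjoint_left]
    rintro s hs1 hs2
    exact absurd hs2.1 (not_le.2 hs1.2)
  rw [← hsplit, MeasureTheory.setIntegral_union hdisj measurableSet_Ico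
    (hNint.mono_set (hsplit ▸ Set.subset_union_left))
    (hNint.mono_set (hsplit ▸ Set.subset_union_right))]
  have hcomp : IntegrableOn (fun s => ‖h (u * s)‖) (Set.Ioo 0 (1/2)) volume := by
    have := (intervalIntegrable_comp_mul hint hu0 hu.2 hb).norm
    rw [intervalIntegrable_iff_integrableOn_Ioc_of_le (by norm_num)] at this
    exact this.mono_set Set.Ioo_subset_Ioc_self
  have piece1 : (∫ s in Set.Ioo (0:ℝ) (1/2), ‖(1 - s) ^ (α - 1) * (u ^ (α - 1) * h (u * s))‖)
      ≤ D * B * (a⁻¹ * I0) := by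
    have step1 : (∫ s in Set.Ioo (0:ℝ) (1/2), ‖(1 - s) ^ (α - 1) * (u ^ (α - 1) * h (u * s))‖)
        ≤ ∫ s in Set.Ioo (0:ℝ) (1/2), D * B * ‖h (u * s)‖ := by
      apply MeasureTheory.setIntegral_mono_on
        (hNint.mono_set (hsplit ▸ Set.subset_union_left))
        ((hcomp.const_mul _)) measurableSet_Ioo
      intro s hs
      rw [norm_mul, norm_mul]
      have e1 : ‖(1 - s) ^ (α - 1)‖ ≤ D := by
        rw [Real.norm_eq_abs, abs_of_nonneg (Real.rpow_nonneg (by linarith [hs.2]) _)]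
        exact rpow_max_bound (by norm_num) (by linarith [hs.2]) (by linarith [hs.1])
      have e2 : ‖u ^ (α - 1)‖ ≤ B := by
        rw [Real.norm_eq_abs, abs_of_nonneg (Real.rpow_nonneg hu0.le _)]
        exact rpow_max_bound ha hu.1 hu.2
      calc ‖(1 - s) ^ (α - 1)‖ * (‖u ^ (α - 1)‖ * ‖h (u * s)‖)
          ≤ D * (B * ‖h (u * s)‖) := by
            apply mul_le_mul e1 (mul_le_mul e2 (le_refl _) (norm_nonneg _) hB0)
              (mul_nonneg (norm_nonneg _) (norm_nonneg _)) hD0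
        _ = D * B * ‖h (u * s)‖ := by ring
    have step2 : (∫ s in Set.Ioo (0:ℝ) (1/2), ‖h (u * s)‖) ≤ a⁻¹ * I0 := by
      have e3 : (∫ s in Set.Ioo (0:ℝ) (1/2), ‖h (u * s)‖)
          = ∫ s in (0:ℝ)..(1/2), ‖h (u * s)‖ := by
        rw [intervalIntegral.integral_of_le (by norm_num : (0:ℝ) ≤ 1/2)]
        exact MeasureTheory.setIntegral_congr_set MeasureTheory.Ioo_ae_eq_Ioc
      have e4 : (∫ s in (0:ℝ)..(1/2), ‖h (u * s)‖) = u⁻¹ * ∫ t in (0:ℝ)..(u/2), ‖h t‖ := by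
        have h6 := intervalIntegral.integral_comp_mul_left
          (fun t => ‖h t‖) (a := (0:ℝ)) (b := 1/2) hu0.ne'
        rw [mul_zero] at h6
        rw [show u * (1/2) = u/2 by ring] at h6
        rw [h6, smul_eq_mul]
      have hI0int : IntegrableOn (fun t => ‖h t‖) (Set.Ioo (0:ℝ) b) volume :=
        (hint b (lt_of_lt_of_le ha hab) hb).norm
      have hI00 : 0 ≤ I0 := MeasureTheory.setIntegral_nonneg measurableSet_Ioo
        (fun t _ => norm_nonneg _)
      have e5 : (∫ t in (0:ℝ)..(u/2), ‖h t‖) ≤ I0 := by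
        rw [intervalIntegral.integral_of_le (by linarith : (0:ℝ) ≤ u/2)]
        apply MeasureTheory.setIntegral_mono_set hI0int
          (Filter.Eventually.of_forall (fun t => norm_nonneg _))
        apply HasSubset.Subset.eventuallyLE
        intro t ht
        exact ⟨ht.1, lt_of_le_of_lt ht.2 (by linarith [hu.2])⟩
      have e6 : (∫ t in (0:ℝ)..(u/2), ‖h t‖) ≥ 0 :=
        intervalIntegral.integral_nonneg (by linarith) (fun t _ => norm_nonneg _)
      rw [e3, e4]
      have : u⁻¹ ≤ a⁻¹ := by
        apply inv_anti₀ ha hu.1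
      calc u⁻¹ * ∫ t in (0:ℝ)..(u/2), ‖h t‖ ≤ u⁻¹ * I0 :=
            mul_le_mul_of_nonneg_left e5 (inv_nonneg.2 hu0.le)
        _ ≤ a⁻¹ * I0 := mul_le_mul_of_nonneg_right this hI00
    calc (∫ s in Set.Ioo (0:ℝ) (1/2), ‖(1 - s) ^ (α - 1) * (u ^ (α - 1) * h (u * s))‖)
        ≤ ∫ s in Set.Ioo (0:ℝ) (1/2), D * B * ‖h (u * s)‖ := step1
      _ = D * B * ∫ s in Set.Ioo (0:ℝ) (1/2), ‖h (u * s)‖ := by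
          rw [MeasureTheory.integral_const_mul]
      _ ≤ D * B * (a⁻¹ * I0) := by
          apply mul_le_mul_of_nonneg_left step2 (mul_nonneg hD0 hB0)
  have piece2 : (∫ s in Set.Ico (1/2:ℝ) 1, ‖(1 - s) ^ (α - 1) * (u ^ (α - 1) * h (u * s))‖)
      ≤ B * M * c2 := by
    have hker : IntegrableOn (fun s => (1 - s) ^ (α - 1)) (Set.Ico (1/2:ℝ) 1) volume := by
      have := intervalIntegrable_rpow_kernel hα (a := (1/2:ℝ)) (b := 1) (by norm_num)
      rw [intervalIntegrable_iff_integrableOn_Ioc_of_le (by norm_num)] at this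
      exact this.congr_set_ae MeasureTheory.Ico_ae_eq_Ioc
    have step1 : (∫ s in Set.Ico (1/2:ℝ) 1, ‖(1 - s) ^ (α - 1) * (u ^ (α - 1) * h (u * s))‖)
        ≤ ∫ s in Set.Ico (1/2:ℝ) 1, B * M * (1 - s) ^ (α - 1) := by
      apply MeasureTheory.setIntegral_mono_on
        (hNint.mono_set (hsplit ▸ Set.subset_union_right))
        (hker.const_mul _) measurableSet_Ico
      intro s hs
      have hs0 : (0:ℝ) ≤ 1 - s := by linarith [hs.2.le]
      rw [norm_mul, norm_mul, Real.norm_eq_abs (( 1 - s) ^ (α - 1)),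
        abs_of_nonneg (Real.rpow_nonneg hs0 _)]
      have e2 : ‖u ^ (α - 1)‖ ≤ B := by
        rw [Real.norm_eq_abs, abs_of_nonneg (Real.rpow_nonneg hu0.le _)]
        exact rpow_max_bound ha hu.1 hu.2
      have e3 : ‖h (u * s)‖ ≤ M := by
        apply hM
        constructor
        · nlinarith [hs.1, hu.1]
        · nlinarith [hs.2.le, hu.2, hu0.le]
      calc (1 - s) ^ (α - 1) * (‖u ^ (α - 1)‖ * ‖h (u * s)‖)
          ≤ (1 - s) ^ (α - 1) * (B * M) := by
            apply mul_le_mul_of_nonneg_left _ (Real.rpow_nonneg hs0 _)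
            exact mul_le_mul e2 e3 (norm_nonneg _) hB0
        _ = B * M * (1 - s) ^ (α - 1) := by ring
    rw [MeasureTheory.integral_const_mul] at step1
    exact step1
  linarith

lemma II_congr_Ioc {F G : ℝ → ℝ} {a b : ℝ} (hab : a ≤ b)
    (h : Set.EqOn F G (Set.Ioc a b)) (hF : IntervalIntegrable F volume a b) :
    IntervalIntegrable G volume a b := by
  rw [intervalIntegrable_iff_integrableOn_Ioc_of_le hab] at hF ⊢
  exact hF.congr_fun h measurableSet_Ioc

lemma II_kernel_const {α : ℝ} (hα : 0 < α) {g : ℝ → ℝ}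
    (hc : ContinuousOn g (Set.Ioo 0 1))
    (hint : ∀ r : ℝ, 0 < r → r < 1 → IntegrableOn g (Set.Ioo 0 r) volume)
    {x : ℝ} (hx : x ∈ Set.Ioo (0:ℝ) 1) (c : ℝ) :
    IntervalIntegrable (fun s => (1 - s) ^ (α - 1) * (c * g (x * s))) volume 0 1 := by
  apply II_congr_Ioc zero_le_one (fun s _ => by ring)
    ((intervalIntegrable_kernel_s hα hc hint hx).const_mul c)

lemma prod_integrable {α : ℝ} (hα : 0 < α) {h : ℝ → ℝ}
    (hc : ContinuousOn h (Set.Ioo 0 1))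
    (hint : ∀ r : ℝ, 0 < r → r < 1 → IntegrableOn h (Set.Ioo 0 r) volume)
    {x₀ x : ℝ} (h0 : 0 < x₀) (hx : x₀ ≤ x) (h1 : x < 1) :
    Integrable (fun p : ℝ × ℝ => (1 - p.2) ^ (α - 1) * (p.1 ^ (α - 1) * h (p.1 * p.2)))
      ((volume.restrict (Set.Ioo x₀ x)).prod (volume.restrict (Set.Ioo 0 1))) := by
  have hmeas : AEStronglyMeasurable
      (fun p : ℝ × ℝ => (1 - p.2) ^ (α - 1) * (p.1 ^ (α - 1) * h (p.1 * p.2)))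
      ((volume.restrict (Set.Ioo x₀ x)).prod (volume.restrict (Set.Ioo 0 1))) := by
    rw [Measure.prod_restrict]
    apply ContinuousOn.aestronglyMeasurable _ (measurableSet_Ioo.prod measurableSet_Ioo)
    have hsub : ∀ p : ℝ × ℝ, p ∈ (Set.Ioo x₀ x ×ˢ Set.Ioo (0:ℝ) 1) →
        p.1 * p.2 ∈ Set.Ioo (0:ℝ) 1 := by
      rintro ⟨u, s⟩ ⟨⟨hu1, hu2⟩, ⟨hs1, hs2⟩⟩
      constructor
      · exact mul_pos (h0.trans hu1) hs1
      · calc u * s < u * 1 := by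
              apply mul_lt_mul_of_pos_left hs2 (by linarith)
          _ = u := mul_one u
          _ < 1 := lt_of_lt_of_le hu2 h1.le
    apply ContinuousOn.mul
    · apply ContinuousOn.rpow_const (continuousOn_const.sub (continuous_snd.continuousOn))
      rintro ⟨u, s⟩ ⟨_, hs⟩
      left
      simp only [Pi.sub_apply]
      intro hcontra
      have := hs.2
      linarith
    apply ContinuousOn.mul
    · apply ContinuousOn.rpow_const (continuous_fst.continuousOn)
      rintro ⟨u, s⟩ ⟨hu, _⟩
      left
      exact (lt_of_lt_of_le h0 hu.1.le).ne'
    · exact hc.comp ((continuous_fst.mul continuous_snd).continuousOn) hsub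
  rw [MeasureTheory.integrable_prod_iff hmeas]
  constructor
  · filter_upwards [MeasureTheory.ae_restrict_mem measurableSet_Ioo] with u hu
    exact norm_integrand_integrableOn hα hc hint ⟨h0.trans hu.1, hu.2.trans h1⟩
  · obtain ⟨C, hC⟩ := norm_integral_bound hα hc hint h0 hx h1
    refine ⟨hmeas.norm.integral_prod_right', ?_⟩
    apply HasFiniteIntegral.restrict_of_bounded (C := C) measure_Ioo_lt_top
    filter_upwards [MeasureTheory.ae_restrict_mem measurableSet_Ioo] with u hu
    rw [Real.norm_eq_abs, abs_of_nonneg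
      (MeasureTheory.integral_nonneg (fun s => norm_nonneg _))]
    exact hC u ⟨hu.1.le, hu.2.le⟩

lemma fubini_step {α : ℝ} (hα : 0 < α) {g : ℝ → ℝ} (hg : Good g)
    {x₀ x : ℝ} (h0 : 0 < x₀) (hx : x₀ ≤ x) (h1 : x < 1) :
    Fi α g x - Fi α g x₀
      = ∫ u in x₀..x, u⁻¹ * Fi α (fun y => α * g y + deltaOp g y) u := by
  set h : ℝ → ℝ := fun y => α * g y + deltaOp g y with hh
  have hGoodh : Good h := hg.combo hg.delta α
  have hmem : x ∈ Set.Ioo (0:ℝ) 1 := ⟨h0.trans_le hx, h1⟩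
  have hmem0 : x₀ ∈ Set.Ioo (0:ℝ) 1 := ⟨h0, lt_of_le_of_lt hx h1⟩
  -- Step 1: pointwise FTC in the scaled variable
  have key : ∀ s ∈ Set.Ioc (0:ℝ) 1,
      x ^ α * g (x * s) - x₀ ^ α * g (x₀ * s)
        = ∫ u in x₀..x, u ^ (α - 1) * h (u * s) := by
    intro s hs
    have hmaps : ∀ u ∈ Set.Icc x₀ x, u * s ∈ Set.Ioo (0:ℝ) 1 := by
      intro u hu
      have hu0 : 0 < u := h0.trans_le hu.1
      constructor
      · exact mul_pos hu0 hs.1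
      · calc u * s ≤ u * 1 := mul_le_mul_of_nonneg_left hs.2 hu0.le
          _ = u := mul_one u
          _ < 1 := lt_of_le_of_lt hu.2 h1
    rw [← intervalIntegral.integral_eq_sub_of_hasDerivAt
      (f := fun u => u ^ α * g (u * s)) (f' := fun u => u ^ (α - 1) * h (u * s)) ?hderiv ?hint]
    case hderiv =>
      intro u hu
      rw [Set.uIcc_of_le hx] at hu
      have hu0 : 0 < u := h0.trans_le hu.1
      have hus := hmaps u hu
      have d1 : HasDerivAt (fun u : ℝ => u ^ α) (α * u ^ (α - 1)) u :=
        Real.hasDerivAt_rpow_const (Or.inl hu0.ne')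
      have d2 : HasDerivAt (fun u : ℝ => g (u * s)) (deriv g (u * s) * s) u := by
        have inner : HasDerivAt (fun u : ℝ => u * s) s u := by
          simpa using (hasDerivAt_id u).mul_const s
        exact ((hg.diffAt hus).hasDerivAt).comp u inner
      have := d1.fun_mul d2
      convert this using 1
      case e'_4 => rfl
      show u ^ (α - 1) * (α * g (u * s) + (u * s) * deriv g (u * s)) = _
      have hu_eq : u ^ α = u ^ (α - 1) * u := by
        rw [← Real.rpow_add_one hu0.ne' (α - 1)]; norm_num
      rw [hu_eq]; ring
    case hint =>
      apply ContinuousOn.intervalIntegrable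
      rw [Set.uIcc_of_le hx]
      apply ContinuousOn.mul
      · apply ContinuousOn.rpow_const continuousOn_id
        intro u hu
        exact Or.inl (h0.trans_le hu.1).ne'
      · apply hGoodh.cont.comp (continuous_mul_right s).continuousOn hmaps
  -- Step 2: write the difference as a single s-integral
  have hIIx := intervalIntegrable_kernel_s hα hg.cont (fun r hr hr' => hg.int0 hr hr') hmem
  have hIIx0 := intervalIntegrable_kernel_s hα hg.cont (fun r hr hr' => hg.int0 hr hr') hmem0
  have step2 : Fi α g x - Fi α g x₀
      = ∫ s in (0:ℝ)..1, ((1 - s) ^ (α - 1) * (x ^ α * g (x * s))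
          - (1 - s) ^ (α - 1) * (x₀ ^ α * g (x₀ * s))) := by
    rw [Fi_scale g hmem.1, Fi_scale g hmem0.1]
    rw [← intervalIntegral.integral_const_mul, ← intervalIntegral.integral_const_mul,
      ← intervalIntegral.integral_sub (hIIx.const_mul _) (hIIx0.const_mul _)]
    apply intervalIntegral.integral_congr
    intro s _
    show x ^ α * ((1 - s) ^ (α - 1) * g (x * s))
        - x₀ ^ α * ((1 - s) ^ (α - 1) * g (x₀ * s)) = _
    ring
  -- Step 3: insert the inner integral
  have step3 : Fi α g x - Fi α g x₀
      = ∫ s in (0:ℝ)..1, (1 - s) ^ (α - 1) * ∫ u in x₀..x, u ^ (α - 1) * h (u * s) := by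
    rw [step2]
    apply intervalIntegral.integral_congr_ae
    filter_upwards with s hs
    rw [Set.uIoc_of_le zero_le_one] at hs
    rw [← key s hs]
    ring
  rw [step3]
  -- Step 4: convert to set integrals and swap
  have conv_outer : ∀ F : ℝ → ℝ, (∫ s in (0:ℝ)..1, F s) = ∫ s in Set.Ioo (0:ℝ) 1, F s := by
    intro F
    rw [intervalIntegral.integral_of_le zero_le_one]
    exact (MeasureTheory.setIntegral_congr_set MeasureTheory.Ioo_ae_eq_Ioc).symm
  have conv_inner : ∀ F : ℝ → ℝ, (∫ u in x₀..x, F u) = ∫ u in Set.Ioo x₀ x, F u := by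
    intro F
    rw [intervalIntegral.integral_of_le hx]
    exact (MeasureTheory.setIntegral_congr_set MeasureTheory.Ioo_ae_eq_Ioc).symm
  rw [conv_outer]
  have e0 : ∀ s : ℝ, (∫ u in x₀..x, u ^ (α - 1) * h (u * s))
      = ∫ u in Set.Ioo x₀ x, u ^ (α - 1) * h (u * s) := fun s => conv_inner _
  simp_rw [e0]
  rw [conv_inner (fun u => u⁻¹ * Fi α h u)]
  have hswap : (∫ s in Set.Ioo (0:ℝ) 1, (1 - s) ^ (α - 1)
        * ∫ u in Set.Ioo x₀ x, u ^ (α - 1) * h (u * s))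
      = ∫ u in Set.Ioo x₀ x, ∫ s in Set.Ioo (0:ℝ) 1,
          (1 - s) ^ (α - 1) * (u ^ (α - 1) * h (u * s)) := by
    have e1 : ∀ s : ℝ, (1 - s) ^ (α - 1) * ∫ u in Set.Ioo x₀ x, u ^ (α - 1) * h (u * s)
        = ∫ u in Set.Ioo x₀ x, (1 - s) ^ (α - 1) * (u ^ (α - 1) * h (u * s)) := by
      intro s
      rw [MeasureTheory.integral_const_mul]
    simp_rw [e1]
    have hprod := prod_integrable hα hGoodh.cont
      (fun r hr hr' => hGoodh.int0 hr hr') h0 hx h1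
    have hswapped : Integrable
        (fun p : ℝ × ℝ => (1 - p.1) ^ (α - 1) * (p.2 ^ (α - 1) * h (p.2 * p.1)))
        ((volume.restrict (Set.Ioo (0:ℝ) 1)).prod (volume.restrict (Set.Ioo x₀ x))) := by
      have := hprod.swap
      exact this
    exact MeasureTheory.integral_integral_swap hswapped
  rw [hswap]
  -- Step 5: evaluate the inner integral
  apply MeasureTheory.setIntegral_congr_fun measurableSet_Ioo
  intro u hu
  have hu0 : 0 < u := h0.trans hu.1
  have humem : u ∈ Set.Ioo (0:ℝ) 1 := ⟨hu0, hu.2.trans h1⟩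
  have e2 : (∫ s in Set.Ioo (0:ℝ) 1, (1 - s) ^ (α - 1) * (u ^ (α - 1) * h (u * s)))
      = u ^ (α - 1) * ∫ s in (0:ℝ)..1, (1 - s) ^ (α - 1) * h (u * s) := by
    rw [← conv_outer]
    rw [← intervalIntegral.integral_const_mul]
    apply intervalIntegral.integral_congr
    intro s _
    show (1 - s) ^ (α - 1) * (u ^ (α - 1) * h (u * s))
        = u ^ (α - 1) * ((1 - s) ^ (α - 1) * h (u * s))
    ring
  show (∫ s in Set.Ioo (0:ℝ) 1, (1 - s) ^ (α - 1) * (u ^ (α - 1) * h (u * s)))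
      = u⁻¹ * Fi α h u
  rw [e2, Fi_scale h hu0]
  rw [← mul_assoc]
  congr 1
  rw [Real.rpow_sub hu0, Real.rpow_one, div_eq_mul_inv, mul_comm]

lemma Phi_repr {α : ℝ} (h : ℝ → ℝ) {u : ℝ} (hu0 : 0 < u) :
    u⁻¹ * Fi α h u = ∫ s in (0:ℝ)..1, (1 - s) ^ (α - 1) * (u ^ (α - 1) * h (u * s)) := by
  rw [Fi_scale h hu0, ← mul_assoc,
    show u⁻¹ * u ^ α = u ^ (α - 1) by
      rw [Real.rpow_sub hu0, Real.rpow_one, div_eq_mul_inv, mul_comm],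
    ← intervalIntegral.integral_const_mul]
  apply intervalIntegral.integral_congr
  intro s _
  show u ^ (α - 1) * ((1 - s) ^ (α - 1) * h (u * s))
      = (1 - s) ^ (α - 1) * (u ^ (α - 1) * h (u * s))
  ring

lemma kernel_prod_meas {α : ℝ} {h : ℝ → ℝ} (hc : ContinuousOn h (Set.Ioo 0 1))
    {x₀ x : ℝ} (h0 : 0 < x₀) (h1 : x < 1) :
    AEStronglyMeasurable
      (fun p : ℝ × ℝ => (1 - p.2) ^ (α - 1) * (p.1 ^ (α - 1) * h (p.1 * p.2)))
      ((volume.restrict (Set.Ioo x₀ x)).prod (volume.restrict (Set.Ioo 0 1))) := by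
  rw [MeasureTheory.Measure.prod_restrict]
  apply ContinuousOn.aestronglyMeasurable _ (measurableSet_Ioo.prod measurableSet_Ioo)
  have hsub : ∀ p : ℝ × ℝ, p ∈ (Set.Ioo x₀ x ×ˢ Set.Ioo (0:ℝ) 1) →
      p.1 * p.2 ∈ Set.Ioo (0:ℝ) 1 := by
    rintro ⟨u, s⟩ ⟨⟨hu1, hu2⟩, ⟨hs1, hs2⟩⟩
    constructor
    · exact mul_pos (h0.trans hu1) hs1
    · calc u * s < u * 1 := mul_lt_mul_of_pos_left hs2 (h0.trans hu1)
        _ = u := mul_one u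
        _ < 1 := hu2.trans h1
  apply ContinuousOn.mul
  · apply ContinuousOn.rpow_const (continuousOn_const.sub (continuous_snd.continuousOn))
    rintro ⟨u, s⟩ ⟨_, hs⟩
    left
    simp only [Pi.sub_apply]
    intro hcontra
    have := hs.2
    linarith
  apply ContinuousOn.mul
  · apply ContinuousOn.rpow_const (continuous_fst.continuousOn)
    rintro ⟨u, s⟩ ⟨hu, _⟩
    left
    exact (h0.trans hu.1).ne'
  · exact hc.comp ((continuous_fst.mul continuous_snd).continuousOn) hsub

lemma intervalIntegrable_Phi {α : ℝ} (hα : 0 < α) {h : ℝ → ℝ}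
    (hc : ContinuousOn h (Set.Ioo 0 1))
    (hint : ∀ r : ℝ, 0 < r → r < 1 → IntegrableOn h (Set.Ioo 0 r) volume)
    {a b : ℝ} (ha : 0 < a) (hab : a ≤ b) (hb : b < 1) :
    IntervalIntegrable (fun u => u⁻¹ * Fi α h u) volume a b := by
  obtain ⟨C, hC⟩ := norm_integral_bound hα hc hint ha hab hb
  have hbound : ∀ u ∈ Set.Ioo a b, ‖u⁻¹ * Fi α h u‖ ≤ C := by
    intro u hu
    have hu0 : 0 < u := ha.trans hu.1
    rw [Phi_repr h hu0]
    calc ‖∫ s in (0:ℝ)..1, (1 - s) ^ (α - 1) * (u ^ (α - 1) * h (u * s))‖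
        ≤ ∫ s in (0:ℝ)..1, ‖(1 - s) ^ (α - 1) * (u ^ (α - 1) * h (u * s))‖ :=
          intervalIntegral.norm_integral_le_integral_norm zero_le_one
      _ = ∫ s in Set.Ioo (0:ℝ) 1, ‖(1 - s) ^ (α - 1) * (u ^ (α - 1) * h (u * s))‖ := by
          rw [intervalIntegral.integral_of_le zero_le_one]
          exact (MeasureTheory.setIntegral_congr_set MeasureTheory.Ioo_ae_eq_Ioc).symm
      _ ≤ C := hC u ⟨hu.1.le, hu.2.le⟩
  have hmeas : AEStronglyMeasurable (fun u => u⁻¹ * Fi α h u)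
      (volume.restrict (Set.Ioo a b)) := by
    have hpm := kernel_prod_meas (x₀ := a) (x := b) (α := α) hc ha hb
    have hF := hpm.integral_prod_right'
    apply hF.congr
    rw [Filter.eventuallyEq_iff_exists_mem]
    refine ⟨Set.Ioo a b, MeasureTheory.ae_restrict_mem measurableSet_Ioo, fun u hu => ?_⟩
    have hu0 : 0 < u := ha.trans hu.1
    show (∫ s in Set.Ioo (0:ℝ) 1, (1 - s) ^ (α - 1) * (u ^ (α - 1) * h (u * s)))
        = u⁻¹ * Fi α h u
    rw [Phi_repr h hu0, intervalIntegral.integral_of_le zero_le_one]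
    exact MeasureTheory.setIntegral_congr_set MeasureTheory.Ioo_ae_eq_Ioc
  have hIoo : IntegrableOn (fun u => u⁻¹ * Fi α h u) (Set.Ioo a b) volume := by
    refine ⟨hmeas, ?_⟩
    apply HasFiniteIntegral.restrict_of_bounded (C := C) measure_Ioo_lt_top
    filter_upwards [MeasureTheory.ae_restrict_mem measurableSet_Ioo] with u hu
    exact hbound u hu
  rw [intervalIntegrable_iff_integrableOn_Ioc_of_le hab]
  exact hIoo.congr_set_ae MeasureTheory.Ioo_ae_eq_Ioc.symm

lemma Fi_contOn {α : ℝ} (hα : 0 < α) {h : ℝ → ℝ} (hG : Good h) :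
    ContinuousOn (Fi α h) (Set.Ioo 0 1) := by
  intro x hx
  obtain ⟨hx0, hx1⟩ := hx
  set a := x/2 with ha
  set b := (x+1)/2 with hb
  have ha0 : 0 < a := by positivity
  have hax : a < x := by rw [ha]; linarith
  have hxb : x < b := by rw [hb]; linarith
  have hb1 : b < 1 := by rw [hb]; linarith
  set h₂ : ℝ → ℝ := fun y => α * h y + deltaOp h y with hh₂
  have hG₂ : Good h₂ := hG.combo hG.delta α
  have hΦint : IntegrableOn (fun u => u⁻¹ * Fi α h₂ u) (Set.uIcc a b) volume := by
    have := intervalIntegrable_Phi hα hG₂.cont (fun r hr hr' => hG₂.int0 hr hr')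
      ha0 (by linarith) hb1
    rw [intervalIntegrable_iff_integrableOn_Ioc_of_le (by linarith)] at this
    rw [Set.uIcc_of_le (by linarith : a ≤ b)]
    exact this.congr_set_ae MeasureTheory.Ioc_ae_eq_Icc.symm
  have hprim : ContinuousOn (fun y => ∫ u in a..y, u⁻¹ * Fi α h₂ u) (Set.uIcc a b) :=
    intervalIntegral.continuousOn_primitive_interval hΦint
  have heq : ∀ y ∈ Set.Ioo a b,
      Fi α h y = Fi α h a + ∫ u in a..y, u⁻¹ * Fi α h₂ u := by
    intro y hy
    have := fubini_step hα hG ha0 hy.1.le (lt_trans hy.2 hb1)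
    linarith [this]
  apply ContinuousAt.continuousWithinAt
  have hca : ContinuousAt (fun y => Fi α h a + ∫ u in a..y, u⁻¹ * Fi α h₂ u) x := by
    apply ContinuousAt.add continuousAt_const
    apply (hprim.continuousAt (s := Set.uIcc a b) _)
    rw [Set.uIcc_of_le (by linarith : a ≤ b)]
    exact Icc_mem_nhds hax hxb
  apply hca.congr
  filter_upwards [Ioo_mem_nhds hax hxb] with y hy
  exact (heq y hy).symm

lemma Fi_hasDerivAt {α : ℝ} (hα : 0 < α) {g : ℝ → ℝ} (hg : Good g)
    {x : ℝ} (hx : x ∈ Set.Ioo (0:ℝ) 1) :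
    HasDerivAt (Fi α g) (x⁻¹ * Fi α (fun y => α * g y + deltaOp g y) x) x := by
  obtain ⟨hx0, hx1⟩ := hx
  set a := x/2 with ha
  set b := (x+1)/2 with hb
  have ha0 : 0 < a := by positivity
  have hax : a < x := by rw [ha]; linarith
  have hxb : x < b := by rw [hb]; linarith
  have hb1 : b < 1 := by rw [hb]; linarith
  set h : ℝ → ℝ := fun y => α * g y + deltaOp g y with hh
  have hGh : Good h := hg.combo hg.delta α
  set Φ : ℝ → ℝ := fun u => u⁻¹ * Fi α h u with hΦ
  have hΦcont : ContinuousOn Φ (Set.Ioo 0 1) := by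
    apply ContinuousOn.mul _ (Fi_contOn hα hGh)
    apply ContinuousOn.inv₀ continuousOn_id
    intro u hu
    exact hu.1.ne'
  have hψ : HasDerivAt (fun y => Fi α g a + ∫ u in a..y, Φ u) (Φ x) x := by
    apply HasDerivAt.const_add
    apply intervalIntegral.integral_hasDerivAt_right
      (intervalIntegrable_Phi hα hGh.cont (fun r hr hr' => hGh.int0 hr hr')
        ha0 hax.le hx1)
      ⟨Set.Ioo 0 1, Ioo_mem_nhds hx0 hx1,
        hΦcont.aestronglyMeasurable measurableSet_Ioo⟩
      (hΦcont.continuousAt (Ioo_mem_nhds hx0 hx1))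
  apply hψ.congr_of_eventuallyEq
  filter_upwards [Ioo_mem_nhds hax hxb] with y hy
  have := fubini_step hα hg ha0 hy.1.le (lt_trans hy.2 hb1)
  linarith [this]

lemma good_of_hyps {f : ℝ → ℝ}
    (hf_smooth : ∀ n : ℕ, ContDiffOn ℝ n f (Set.Ioo 0 1))
    (hδf_int : ∀ n : ℕ, 1 ≤ n → ∀ r : ℝ, 0 < r → r < 1 →
      IntegrableOn (deltaOp^[n] f) (Set.Ioo 0 r) volume) :
    Good f := by
  have hsm : ContDiffOn ℝ ∞ f (Set.Ioo 0 1) := contDiffOn_infty.2 hf_smooth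
  refine ⟨hsm, fun n r h0 h1 => ?_⟩
  rcases Nat.eq_zero_or_pos n with hn | hn
  · -- the hard case: integrability of f itself
    subst hn
    simp only [Function.iterate_zero, id_eq]
    set r' : ℝ := (1 + r)/2 with hr'
    have hr'0 : 0 < r' := by rw [hr']; linarith
    have hrr' : r < r' := by rw [hr']; linarith
    have hr'1 : r' < 1 := by rw [hr']; linarith
    have hδint : IntegrableOn (deltaOp f) (Set.Ioo 0 r') volume := by
      have := hδf_int 1 le_rfl r' hr'0 hr'1
      simpa using this
    set ψ : ℝ → ℝ := fun t => if 0 < t then ‖deriv f t‖ else 0 with hψ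
    have hψ_nonneg : ∀ t, 0 ≤ ψ t := by
      intro t; rw [hψ]; dsimp only; split <;> simp
    have hψ_meas : Measurable ψ := by
      apply Measurable.ite (measurableSet_lt measurable_const measurable_id)
        (measurable_deriv f).norm measurable_const
    have hψint : ∀ a : ℝ, 0 < a → IntegrableOn ψ (Set.Icc a r) volume := by
      intro a ha0
      rcases le_or_gt a r with har | har
      · have hbase : IntegrableOn (fun t => ‖deltaOp f t‖) (Set.Icc a r) volume := by
          have hnorm : IntegrableOn (fun t => ‖deltaOp f t‖) (Set.Ioo 0 r') volume :=
            hδint.norm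
          apply hnorm.mono_set
          intro t ht
          exact ⟨ha0.trans_le ht.1, lt_of_le_of_lt ht.2 hrr'⟩
        have : IntegrableOn (fun t => t⁻¹ * ‖deltaOp f t‖) (Set.Icc a r) volume := by
          apply hbase.bdd_mul (c := a⁻¹)
            ((continuousOn_inv₀.mono (fun t (ht : t ∈ Set.Icc a r) =>
              (ha0.trans_le ht.1).ne')).aestronglyMeasurable measurableSet_Icc)
          rw [ae_restrict_iff' measurableSet_Icc]
          filter_upwards with t ht
          rw [Real.norm_eq_abs, abs_of_nonneg (inv_nonneg.2 (ha0.trans_le ht.1).le)]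
          exact inv_anti₀ ha0 ht.1
        apply this.congr_fun _ measurableSet_Icc
        intro t ht
        have ht0 : 0 < t := ha0.trans_le ht.1
        show t⁻¹ * ‖deltaOp f t‖ = ψ t
        rw [hψ]; dsimp only
        rw [if_pos ht0, deltaOp, norm_mul, Real.norm_eq_abs t, abs_of_pos ht0]
        field_simp
      · rw [Set.Icc_eq_empty (not_le.2 har)]
        exact integrableOn_empty
    set W : ℝ → ℝ := fun x => ∫ t in x..r, ψ t with hW
    -- continuity of W on (0, r)
    have hWcont : ContinuousOn W (Set.Ioo 0 r) := by
      intro x hx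
      apply ContinuousAt.continuousWithinAt
      have hprim : ContinuousOn W (Set.uIcc (x/2) r) := by
        apply intervalIntegral.continuousOn_primitive_interval_left
        rw [Set.uIcc_of_le (by linarith [hx.1, hx.2] : x/2 ≤ r)]
        exact hψint (x/2) (by linarith [hx.1])
      apply hprim.continuousAt
      rw [Set.uIcc_of_le (by linarith [hx.1, hx.2] : x/2 ≤ r)]
      exact Icc_mem_nhds (by linarith [hx.1]) hx.2
    -- the pointwise bound
    have hbound : ∀ x ∈ Set.Ioo (0:ℝ) r, ‖f x‖ ≤ ‖f r‖ + W x := by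
      intro x hx
      have hsub : Set.uIcc x r ⊆ Set.Ioo (0:ℝ) 1 := by
        rw [Set.uIcc_of_le hx.2.le]
        intro t ht
        exact ⟨hx.1.trans_le ht.1, lt_of_le_of_lt ht.2 h1⟩
      have hftc : f r - f x = ∫ t in x..r, deriv f t := by
        rw [intervalIntegral.integral_eq_sub_of_hasDerivAt]
        · intro t ht
          exact ((hsm.contDiffAt (isOpen_Ioo.mem_nhds (hsub ht))).differentiableAt
            (by simp)).hasDerivAt
        · apply ContinuousOn.intervalIntegrable
          exact (smooth_deriv hsm).continuousOn.mono hsub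
      have h2 : ‖f x‖ ≤ ‖f r‖ + ‖∫ t in x..r, deriv f t‖ := by
        have : f x = f r - (f r - f x) := by ring
        rw [this]
        calc ‖f r - (f r - f x)‖ ≤ ‖f r‖ + ‖f r - f x‖ := norm_sub_le _ _
          _ = ‖f r‖ + ‖∫ t in x..r, deriv f t‖ := by rw [hftc]
      apply h2.trans
      have h3 : ‖∫ t in x..r, deriv f t‖ ≤ ∫ t in x..r, ‖deriv f t‖ :=
        intervalIntegral.norm_integral_le_integral_norm hx.2.le
      have h4 : (∫ t in x..r, ‖deriv f t‖) = W x := by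
        rw [hW]
        apply intervalIntegral.integral_congr
        intro t ht
        rw [Set.uIcc_of_le hx.2.le] at ht
        have htpos : 0 < t := hx.1.trans_le ht.1
        show ‖deriv f t‖ = ψ t
        rw [hψ]
        dsimp only
        rw [if_pos htpos]
      linarith
    -- integrability of W
    have hWint : IntegrableOn W (Set.Ioo 0 r) volume := by
      refine ⟨(hWcont.aestronglyMeasurable measurableSet_Ioo), ?_⟩
      rw [hasFiniteIntegral_iff_norm]
      set Ψ : ℝ → ENNReal := fun t => ENNReal.ofReal (ψ t) with hΨdef
      have hΨmeas : Measurable Ψ := hψ_meas.ennreal_ofReal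
      have key1 : ∀ x ∈ Set.Ioo (0:ℝ) r,
          ENNReal.ofReal ‖W x‖ = ∫⁻ t in Set.Ioc 0 r, (if x < t then Ψ t else 0) := by
        intro x hx
        have hW_nonneg : 0 ≤ W x :=
          intervalIntegral.integral_nonneg hx.2.le (fun t _ => hψ_nonneg t)
        rw [Real.norm_eq_abs, abs_of_nonneg hW_nonneg]
        have e1 : W x = ∫ t in Set.Ioc x r, ψ t := by
          rw [hW]; exact intervalIntegral.integral_of_le hx.2.le
        have hψi : IntegrableOn ψ (Set.Ioc x r) volume :=
          (hψint x hx.1).mono_set Set.Ioc_subset_Icc_self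
        rw [e1, MeasureTheory.ofReal_integral_eq_lintegral_ofReal hψi
          (Filter.Eventually.of_forall (fun t => hψ_nonneg t))]
        have e2 : ∀ t : ℝ, (if x < t then Ψ t else 0) = (Set.Ioi x).indicator Ψ t := by
          intro t
          rw [Set.indicator_apply]
          simp [Set.mem_Ioi]
        have hseteq : Set.Ioi x ∩ Set.Ioc 0 r = Set.Ioc x r := by
          ext t
          simp only [Set.mem_inter_iff, Set.mem_Ioi, Set.mem_Ioc]
          constructor
          · rintro ⟨h1', h2', h3'⟩; exact ⟨h1', h3'⟩
          · rintro ⟨h1', h2'⟩; exact ⟨h1', hx.1.trans h1', h2'⟩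
        simp_rw [e2]
        rw [MeasureTheory.lintegral_indicator measurableSet_Ioi,
          MeasureTheory.Measure.restrict_restrict measurableSet_Ioi, hseteq]
      calc (∫⁻ x in Set.Ioo 0 r, ENNReal.ofReal ‖W x‖)
          = ∫⁻ x in Set.Ioo 0 r, ∫⁻ t in Set.Ioc 0 r, (if x < t then Ψ t else 0) := by
            apply MeasureTheory.setLIntegral_congr_fun_ae measurableSet_Ioo
            filter_upwards with x hx
            exact key1 x hx
        _ = ∫⁻ t in Set.Ioc 0 r, ∫⁻ x in Set.Ioo 0 r, (if x < t then Ψ t else 0) := by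
            apply MeasureTheory.lintegral_lintegral_swap
            apply Measurable.aemeasurable
            exact Measurable.ite (measurableSet_lt measurable_fst measurable_snd)
              (hΨmeas.comp measurable_snd) measurable_const
        _ ≤ ∫⁻ t in Set.Ioc 0 r, ENNReal.ofReal ‖deltaOp f t‖ := by
            apply MeasureTheory.lintegral_mono_ae
            rw [ae_restrict_iff' measurableSet_Ioc]
            filter_upwards with t ht
            have e3 : ∀ x : ℝ, (if x < t then Ψ t else 0)
                = (Set.Iio t).indicator (fun _ => Ψ t) x := by
              intro x
              rw [Set.indicator_apply]
              simp [Set.mem_Iio]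
            simp_rw [e3]
            rw [MeasureTheory.lintegral_indicator measurableSet_Iio,
              MeasureTheory.Measure.restrict_restrict measurableSet_Iio,
              MeasureTheory.setLIntegral_const]
            calc Ψ t * volume (Set.Iio t ∩ Set.Ioo 0 r)
                ≤ Ψ t * ENNReal.ofReal t := by
                  apply mul_le_mul_right
                  calc volume (Set.Iio t ∩ Set.Ioo 0 r)
                      ≤ volume (Set.Ioo 0 t) := by
                        apply measure_mono
                        rintro x ⟨hx1, hx2, _⟩
                        exact ⟨hx2, hx1⟩
                    _ = ENNReal.ofReal t := by rw [Real.volume_Ioo, sub_zero]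
              _ = ENNReal.ofReal ‖deltaOp f t‖ := by
                  rw [hΨdef]
                  dsimp only
                  rw [hψ]
                  dsimp only
                  rw [if_pos ht.1, ← ENNReal.ofReal_mul (norm_nonneg _)]
                  congr 1
                  rw [deltaOp, norm_mul, Real.norm_eq_abs t, abs_of_pos ht.1]
                  ring
        _ ≤ ∫⁻ t in Set.Ioo 0 r', ENNReal.ofReal ‖deltaOp f t‖ := by
            apply MeasureTheory.lintegral_mono_set
            intro t ht
            exact ⟨ht.1, lt_of_le_of_lt ht.2 hrr'⟩
        _ < ⊤ := by
            have := hδint.2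
            rwa [hasFiniteIntegral_iff_norm] at this
    -- conclude
    have hfmeas : AEStronglyMeasurable f (volume.restrict (Set.Ioo 0 r)) :=
      (hsm.continuousOn.mono (fun t ht => ⟨ht.1, lt_trans ht.2 h1⟩)).aestronglyMeasurable
        measurableSet_Ioo
    apply MeasureTheory.Integrable.mono' (g := fun x => ‖f r‖ + W x) _ hfmeas
    · rw [ae_restrict_iff' measurableSet_Ioo]
      filter_upwards with x hx
      exact hbound x hx
    · apply MeasureTheory.Integrable.add _ hWint
      rw [MeasureTheory.integrable_const_iff]
      right
      constructor
      rw [MeasureTheory.Measure.restrict_apply_univ]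
      exact measure_Ioo_lt_top
  · exact hδf_int n hn r h0 h1

lemma Fi_combo {α : ℝ} (hα : 0 < α) {g h : ℝ → ℝ} (hg : Good g) (hh : Good h)
    (c : ℝ) {x : ℝ} (hx : x ∈ Set.Ioo (0:ℝ) 1) :
    Fi α (fun y => c * g y + h y) x = c * Fi α g x + Fi α h x := by
  have hIg := integrableOn_kernel_mul hα hg.cont (fun r hr hr' => hg.int0 hr hr') hx
  have hIh := integrableOn_kernel_mul hα hh.cont (fun r hr hr' => hh.int0 hr hr') hx
  show (∫ t in (0:ℝ)..x, (x - t) ^ (α - 1) * (c * g t + h t)) = _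
  have e1 : (∫ t in (0:ℝ)..x, (x - t) ^ (α - 1) * (c * g t + h t))
      = ∫ t in (0:ℝ)..x, (c * ((x - t) ^ (α - 1) * g t) + (x - t) ^ (α - 1) * h t) := by
    apply intervalIntegral.integral_congr
    intro t _
    show (x - t) ^ (α - 1) * (c * g t + h t) = _
    ring
  rw [e1, intervalIntegral.integral_add (hIg.const_mul c) hIh,
    intervalIntegral.integral_const_mul]
  rfl

/-- the `n`-th `pApply` is Good -/
lemma good_pApply {α : ℝ} {f : ℝ → ℝ} (hf : Good f) : ∀ n : ℕ, Good (pApply α n f) := by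
  intro n
  induction n with
  | zero => exact hf
  | succ n ih =>
    show Good (fun x => (α - n) * pApply α n f x + deltaOp (pApply α n f) x)
    exact ih.combo ih.delta (α - n)

/-- Fi of pApply recursion -/
lemma Fi_pApply_succ {α : ℝ} (hα : 0 < α) {f : ℝ → ℝ} (hf : Good f) (n : ℕ)
    {x : ℝ} (hx : x ∈ Set.Ioo (0:ℝ) 1) :
    Fi α (pApply α (n+1) f) x
      = Fi α (fun y => α * pApply α n f y + deltaOp (pApply α n f) y) x
        - n * Fi α (pApply α n f) x := by
  have hgn := good_pApply (α := α) hf n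
  have e1 : Fi α (pApply α (n+1) f) x
      = (α - n) * Fi α (pApply α n f) x + Fi α (deltaOp (pApply α n f)) x := by
    show Fi α (fun y => (α - n) * pApply α n f y + deltaOp (pApply α n f) y) x = _
    exact Fi_combo hα hgn hgn.delta (α - n) hx
  have e2 : Fi α (fun y => α * pApply α n f y + deltaOp (pApply α n f) y) x
      = α * Fi α (pApply α n f) x + Fi α (deltaOp (pApply α n f)) x :=
    Fi_combo hα hgn hgn.delta α hx
  rw [e1, e2]
  ring

/-- smoothness of Fi -/
lemma Fi_contDiffOn {α : ℝ} (hα : 0 < α) :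
    ∀ k : ℕ, ∀ g : ℝ → ℝ, Good g → ContDiffOn ℝ k (Fi α g) (Set.Ioo 0 1) := by
  intro k
  induction k with
  | zero =>
    intro g hg
    rw [show ((0:ℕ) : WithTop ℕ∞) = 0 by rfl, contDiffOn_zero]
    exact Fi_contOn hα hg
  | succ k ih =>
    intro g hg
    have hcast : ((k + 1 : ℕ) : WithTop ℕ∞) = (k : WithTop ℕ∞) + 1 := by
      push_cast
      rfl
    rw [hcast, contDiffOn_succ_iff_deriv_of_isOpen isOpen_Ioo]
    refine ⟨?_, ?_, ?_⟩
    · intro x hx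
      exact (Fi_hasDerivAt hα hg hx).differentiableAt.differentiableWithinAt
    · intro hcontra
      exact absurd hcontra (WithTop.natCast_ne_top k)
    · have hGh : Good (fun y => α * g y + deltaOp g y) := hg.combo hg.delta α
      apply ContDiffOn.congr
        (f := fun x => x⁻¹ * Fi α (fun y => α * g y + deltaOp g y) x)
      · apply ContDiffOn.mul _ (ih _ hGh)
        apply ContDiffOn.inv contDiffOn_id
        intro x hx
        exact hx.1.ne'
      · intro x hx
        exact (Fi_hasDerivAt hα hg hx).deriv

lemma deriv_iter_const_mul (c : ℝ) (F : ℝ → ℝ) :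
    ∀ n : ℕ, ∀ x : ℝ, deriv^[n] (fun y => c * F y) x = c * deriv^[n] F x := by
  intro n
  induction n with
  | zero => intro x; rfl
  | succ n ih =>
    intro x
    rw [Function.iterate_succ_apply', Function.iterate_succ_apply']
    have : deriv^[n] (fun y => c * F y) = fun y => c * deriv^[n] F y := funext ih
    rw [this, deriv_const_mul_field]

lemma deriv_iter_Fi {α : ℝ} (hα : 0 < α) {f : ℝ → ℝ} (hf : Good f) :
    ∀ n : ℕ, ∀ x ∈ Set.Ioo (0:ℝ) 1,
      deriv^[n] (Fi α f) x = (x ^ n)⁻¹ * Fi α (pApply α n f) x := by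
  intro n
  induction n with
  | zero => intro x _; simp [pApply]
  | succ n ih =>
    intro x hx
    rw [Function.iterate_succ_apply']
    have heq : deriv^[n] (Fi α f) =ᶠ[nhds x]
        fun y => (y ^ n)⁻¹ * Fi α (pApply α n f) y := by
      filter_upwards [isOpen_Ioo.mem_nhds hx] with y hy using ih y hy
    rw [heq.deriv_eq]
    have hgn := good_pApply (α := α) hf n
    set A : ℝ := Fi α (fun y => α * pApply α n f y + deltaOp (pApply α n f) y) x with hA
    set B : ℝ := Fi α (pApply α n f) x with hB
    have hFd : HasDerivAt (Fi α (pApply α n f)) (x⁻¹ * A) x := Fi_hasDerivAt hα hgn hx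
    have hpow : HasDerivAt (fun y : ℝ => y ^ n) (n * x ^ (n - 1)) x := hasDerivAt_pow n x
    have hx0 : x ≠ 0 := hx.1.ne'
    have hdiv := hFd.fun_div hpow (pow_ne_zero n hx0)
    have hfun : (fun y => (y ^ n)⁻¹ * Fi α (pApply α n f) y)
        = fun y => Fi α (pApply α n f) y / y ^ n :=
      funext fun y => (div_eq_inv_mul _ _).symm
    rw [hfun, hdiv.deriv, Fi_pApply_succ hα hf n hx, ← hA, ← hB]
    rcases Nat.eq_zero_or_pos n with hn | hn
    · subst hn
      simp only [pow_zero, pow_one, Nat.cast_zero]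
      field_simp
      ring
    · obtain ⟨m, rfl⟩ := Nat.exists_eq_add_of_le hn
      have hred : 1 + m - 1 = m := by omega
      rw [hred]
      have hx0' : (0:ℝ) < x := hx.1
      field_simp
      ring

theorem iteratedDeriv_rlInt (α : ℝ) (hα : 0 < α) (f : ℝ → ℝ)
    (hf_smooth : ∀ n : ℕ, ContDiffOn ℝ n f (Set.Ioo 0 1))
    (hδf_int : ∀ n : ℕ, 1 ≤ n → ∀ r : ℝ, 0 < r → r < 1 →
      IntegrableOn (deltaOp^[n] f) (Set.Ioo 0 r) volume) :
    ∀ n : ℕ, 1 ≤ n →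
      ContDiffOn ℝ n (rlInt α f) (Set.Ioo 0 1) ∧
      ∀ x ∈ Set.Ioo (0:ℝ) 1,
        deriv^[n] (rlInt α f) x
          = (1 / x ^ n) * rlInt α (pApply α n f) x := by
  intro n _
  have hGf : Good f := good_of_hyps hf_smooth hδf_int
  have hrl : rlInt α f = fun x => (1 / Real.Gamma α) * Fi α f x := rfl
  constructor
  · rw [hrl]
    exact contDiffOn_const.mul (Fi_contDiffOn hα n f hGf)
  · intro x hx
    rw [hrl, deriv_iter_const_mul, deriv_iter_Fi hα hGf n x hx]
    show (1 / Real.Gamma α) * ((x ^ n)⁻¹ * Fi α (pApply α n f) x)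
        = (1 / x ^ n) * ((1 / Real.Gamma α) * Fi α (pApply α n f) x)
    ring
end

section
/- Let 𝒫 be the class of functions on (0,1) that are finite linear combinations of functions of the form t ↦ t^β v(t), where β > 0 and v is infinitely differentiable on (0,1) with all derivatives bounded near t = 0; let ℱ be the linear span of functions of the form t ↦ t^{β−1} u(t)/v(t) with β > 0 and u, v ∈ 𝒫 (v nonvanishing on (0,1)). Then ℱ is closed under the operator δ: if g ∈ ℱ, then the function (δg)(t) = t g′(t) belongs to ℱ. -/
open MeasureTheory Real Set Filter

/-- `v` is infinitely differentiable on `(0,1)` and all of its derivatives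
are bounded near `t = 0`. -/
def SmoothBddNearZero (v : ℝ → ℝ) : Prop :=
  ContDiffOn ℝ (⊤ : ℕ∞) v (Set.Ioo 0 1) ∧
    ∀ n : ℕ, ∃ ε : ℝ, 0 < ε ∧ ε ≤ 1 ∧ ∃ M : ℝ,
      ∀ t ∈ Set.Ioo (0:ℝ) ε, |deriv^[n] v t| ≤ M

/-- The class `𝒫`: finite linear combinations of `t ↦ t^β v(t)` with `β > 0`
and `v` smooth on `(0,1)` with all derivatives bounded near `0`. -/
def MemP (u : ℝ → ℝ) : Prop :=
  ∃ (k : ℕ) (c : Fin k → ℝ) (β : Fin k → ℝ) (v : Fin k → ℝ → ℝ),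
    (∀ i, 0 < β i ∧ SmoothBddNearZero (v i)) ∧
    ∀ t ∈ Set.Ioo (0:ℝ) 1, u t = ∑ i, c i * t ^ β i * v i t

/-- The class `ℱ`: the linear span of functions of the form
`t ↦ t^{β-1} u(t)/v(t)` with `β > 0` and `u, v ∈ 𝒫`, `v` nonvanishing. -/
def MemF (g : ℝ → ℝ) : Prop :=
  ∃ (k : ℕ) (c : Fin k → ℝ) (β : Fin k → ℝ) (u v : Fin k → ℝ → ℝ),
    (∀ i, 0 < β i ∧ MemP (u i) ∧ MemP (v i) ∧
      ∀ t ∈ Set.Ioo (0:ℝ) 1, v i t ≠ 0) ∧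
    ∀ t ∈ Set.Ioo (0:ℝ) 1, g t = ∑ i, c i * t ^ (β i - 1) * u i t / v i t


lemma iterDW_Ioo (f : ℝ → ℝ) (n : ℕ) {x : ℝ} (hx : x ∈ Set.Ioo (0:ℝ) 1) :
    iteratedDerivWithin n f (Set.Ioo 0 1) x = deriv^[n] f x := by
  rw [iteratedDerivWithin_eq_iteratedFDerivWithin,
    iteratedFDerivWithin_of_isOpen n isOpen_Ioo hx,
    ← iteratedDeriv_eq_iteratedFDeriv, iteratedDeriv_eq_iterate]

lemma normIter_Ioo (f : ℝ → ℝ) (n : ℕ) {x : ℝ} (hx : x ∈ Set.Ioo (0:ℝ) 1) :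
    ‖iteratedFDerivWithin ℝ n f (Set.Ioo 0 1) x‖ = |deriv^[n] f x| := by
  rw [norm_iteratedFDerivWithin_eq_norm_iteratedDerivWithin, iterDW_Ioo f n hx, Real.norm_eq_abs]

lemma sbnz_unif {v : ℝ → ℝ}
    (hv : ∀ n : ℕ, ∃ ε : ℝ, 0 < ε ∧ ε ≤ 1 ∧ ∃ M : ℝ,
      ∀ t ∈ Set.Ioo (0:ℝ) ε, |deriv^[n] v t| ≤ M) (n : ℕ) :
    ∃ ε : ℝ, 0 < ε ∧ ε ≤ 1 ∧ ∃ M : ℝ, 0 ≤ M ∧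
      ∀ k ≤ n, ∀ t ∈ Set.Ioo (0:ℝ) ε, |deriv^[k] v t| ≤ M := by
  induction n with
  | zero =>
    obtain ⟨ε, hε, hε1, M, hM⟩ := hv 0
    exact ⟨ε, hε, hε1, max M 0, le_max_right _ _, fun k hk t ht => by
      interval_cases k; exact (hM t ht).trans (le_max_left _ _)⟩
  | succ n ih =>
    obtain ⟨ε₁, hε₁, hε₁1, M₁, hM₁0, hM₁⟩ := ih
    obtain ⟨ε₂, hε₂, hε₂1, M₂, hM₂⟩ := hv (n + 1)
    refine ⟨min ε₁ ε₂, lt_min hε₁ hε₂, (min_le_left _ _).trans hε₁1,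
      max M₁ M₂, le_trans hM₁0 (le_max_left _ _), fun k hk t ht => ?_⟩
    rcases Nat.lt_succ_iff_lt_or_eq.mp (Nat.lt_succ_of_le hk) with h | h
    · exact (hM₁ k (Nat.lt_succ_iff.mp h) t
        ⟨ht.1, ht.2.trans_le (min_le_left _ _)⟩).trans (le_max_left _ _)
    · subst h
      exact (hM₂ t ⟨ht.1, ht.2.trans_le (min_le_right _ _)⟩).trans (le_max_right _ _)

lemma SBNZ.mul {u v : ℝ → ℝ} (hu : SmoothBddNearZero u) (hv : SmoothBddNearZero v) :
    SmoothBddNearZero (fun t => u t * v t) := by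
  refine ⟨hu.1.mul hv.1, fun n => ?_⟩
  obtain ⟨ε₁, hε₁, hε₁1, M₁, hM₁0, hM₁⟩ := sbnz_unif hu.2 n
  obtain ⟨ε₂, hε₂, hε₂1, M₂, hM₂0, hM₂⟩ := sbnz_unif hv.2 n
  refine ⟨min ε₁ ε₂, lt_min hε₁ hε₂, (min_le_left _ _).trans hε₁1,
    (∑ i ∈ Finset.range (n + 1), (n.choose i : ℝ)) * M₁ * M₂, fun t ht => ?_⟩
  have ht1 : t ∈ Set.Ioo (0:ℝ) 1 :=
    ⟨ht.1, ht.2.trans_le ((min_le_left _ _).trans hε₁1)⟩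
  have key := norm_iteratedFDerivWithin_mul_le (𝕜 := ℝ) (f := u) (g := v)
    hu.1 hv.1 (uniqueDiffOn_Ioo 0 1) ht1 (n := n) (by exact_mod_cast le_top)
  rw [normIter_Ioo _ n ht1] at key
  refine key.trans ?_
  rw [Finset.sum_mul, Finset.sum_mul]
  refine Finset.sum_le_sum fun i hi => ?_
  rw [normIter_Ioo _ i ht1, normIter_Ioo _ (n - i) ht1]
  have h1 : |deriv^[i] u t| ≤ M₁ :=
    hM₁ i (Nat.lt_succ_iff.mp (Finset.mem_range.mp hi)) t
      ⟨ht.1, ht.2.trans_le (min_le_left _ _)⟩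
  have h2 : |deriv^[n - i] v t| ≤ M₂ :=
    hM₂ (n - i) (Nat.sub_le _ _) t ⟨ht.1, ht.2.trans_le (min_le_right _ _)⟩
  have hc : (0:ℝ) ≤ n.choose i := Nat.cast_nonneg _
  calc (n.choose i : ℝ) * |deriv^[i] u t| * |deriv^[n - i] v t|
      ≤ (n.choose i : ℝ) * M₁ * M₂ := by
        apply mul_le_mul (mul_le_mul le_rfl h1 (abs_nonneg _) hc) h2 (abs_nonneg _)
        positivity

lemma SBNZ.id : SmoothBddNearZero (fun t : ℝ => t) := by
  constructor
  · exact contDiffOn_id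
  · intro n
    refine ⟨1, one_pos, le_rfl, 1, fun t ht => ?_⟩
    match n with
    | 0 => simpa using le_of_lt (abs_lt.mpr ⟨by linarith [ht.1], ht.2⟩)
    | (n+1) =>
      have h1 : deriv (fun t : ℝ => t) = fun _ => (1:ℝ) := funext fun x => deriv_id x
      rw [Function.iterate_succ_apply, h1]
      match n with
      | 0 => simp
      | (m+1) =>
        have h2 : deriv (fun _ : ℝ => (1:ℝ)) = fun _ => (0:ℝ) := funext fun x => deriv_const x 1
        rw [Function.iterate_succ_apply, h2]
        have h3 : ∀ k, deriv^[k] (fun _ : ℝ => (0:ℝ)) = fun _ => (0:ℝ) := by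
          intro k
          induction k with
          | zero => rfl
          | succ k ih =>
            rw [Function.iterate_succ_apply]
            have hz : _root_.deriv (fun _ : ℝ => (0:ℝ)) = fun _ : ℝ => (0:ℝ) :=
              funext fun x => deriv_const x 0
            rw [hz, ih]
        rw [h3]; simp

lemma SBNZ.deriv {v : ℝ → ℝ} (hv : SmoothBddNearZero v) :
    SmoothBddNearZero (deriv v) := by
  constructor
  · exact hv.1.deriv_of_isOpen isOpen_Ioo (by simp)
  · intro n
    obtain ⟨ε, hε, hε1, M, hM⟩ := hv.2 (n + 1)
    exact ⟨ε, hε, hε1, M, fun t ht => by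
      rw [← Function.iterate_succ_apply]; exact hM t ht⟩

lemma SBNZ.delta {v : ℝ → ℝ} (hv : SmoothBddNearZero v) :
    SmoothBddNearZero (fun t => t * _root_.deriv v t) :=
  SBNZ.mul SBNZ.id (SBNZ.deriv hv)

lemma memP_smul {u : ℝ → ℝ} (a : ℝ) (hu : MemP u) : MemP (fun t => a * u t) := by
  obtain ⟨k, c, β, v, hβv, hrep⟩ := hu
  exact ⟨k, fun i => a * c i, β, v, hβv, fun t ht => by
    dsimp only
    rw [hrep t ht, Finset.mul_sum]; congr 1; ext i; ring⟩

lemma memP_add {u w : ℝ → ℝ} (hu : MemP u) (hw : MemP w) :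
    MemP (fun t => u t + w t) := by
  obtain ⟨k, c, β, v, hβv, hrep⟩ := hu
  obtain ⟨l, d, γ, x, hγx, hrep'⟩ := hw
  refine ⟨k + l, Fin.addCases c d, Fin.addCases β γ, Fin.addCases v x, fun i => ?_, fun t ht => ?_⟩
  · cases i using Fin.addCases with
    | left j => simpa using hβv j
    | right j => simpa using hγx j
  · dsimp only
    rw [hrep t ht, hrep' t ht, Fin.sum_univ_add]
    simp

lemma memP_mul {u w : ℝ → ℝ} (hu : MemP u) (hw : MemP w) :
    MemP (fun t => u t * w t) := by
  obtain ⟨k, c, β, v, hβv, hrep⟩ := hu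
  obtain ⟨l, d, γ, x, hγx, hrep'⟩ := hw
  refine ⟨k * l,
    fun i => c (finProdFinEquiv.symm i).1 * d (finProdFinEquiv.symm i).2,
    fun i => β (finProdFinEquiv.symm i).1 + γ (finProdFinEquiv.symm i).2,
    fun i => fun t => v (finProdFinEquiv.symm i).1 t * x (finProdFinEquiv.symm i).2 t,
    fun i => ⟨add_pos (hβv _).1 (hγx _).1, SBNZ.mul (hβv _).2 (hγx _).2⟩,
    fun t ht => ?_⟩
  dsimp only
  rw [hrep t ht, hrep' t ht, Finset.sum_mul_sum]
  rw [← Equiv.sum_comp finProdFinEquiv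
    (fun i => (c (finProdFinEquiv.symm i).1 * d (finProdFinEquiv.symm i).2) *
      t ^ (β (finProdFinEquiv.symm i).1 + γ (finProdFinEquiv.symm i).2) *
      (v (finProdFinEquiv.symm i).1 t * x (finProdFinEquiv.symm i).2 t)),
    Fintype.sum_prod_type]
  refine Finset.sum_congr rfl fun i _ => Finset.sum_congr rfl fun j _ => ?_
  simp only [Equiv.symm_apply_apply]
  rw [Real.rpow_add ht.1]
  ring

lemma memP_sub {u w : ℝ → ℝ} (hu : MemP u) (hw : MemP w) :
    MemP (fun t => u t - w t) := by
  have := memP_add hu (memP_smul (-1) hw)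
  convert this using 2 with t
  ring

lemma memP_delta {u : ℝ → ℝ} (hu : MemP u) :
    ∃ du : ℝ → ℝ, MemP du ∧ ∀ t ∈ Set.Ioo (0:ℝ) 1,
      DifferentiableAt ℝ u t ∧ t * deriv u t = du t := by
  obtain ⟨k, c, β, v, hβv, hrep⟩ := hu
  have hvd : ∀ i, ∀ t ∈ Set.Ioo (0:ℝ) 1, DifferentiableAt ℝ (v i) t := fun i t ht =>
    ((hβv i).2.1.contDiffAt (isOpen_Ioo.mem_nhds ht)).differentiableAt (by simp)
  have hterm : ∀ t ∈ Set.Ioo (0:ℝ) 1, ∀ i : Fin k,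
      HasDerivAt (fun t => c i * t ^ β i * v i t)
        (c i * (β i * t ^ (β i - 1)) * v i t + c i * t ^ β i * deriv (v i) t) t := by
    intro t ht i
    have h1 : HasDerivAt (fun t : ℝ => c i * t ^ β i) (c i * (β i * t ^ (β i - 1))) t :=
      (Real.hasDerivAt_rpow_const (Or.inl ht.1.ne')).const_mul (c i)
    exact h1.mul ((hvd i t ht).hasDerivAt)
  refine ⟨fun t => (∑ i, (c i * β i) * t ^ β i * v i t) +
      ∑ i, c i * t ^ β i * (t * deriv (v i) t), ?_, fun t ht => ?_⟩
  · exact memP_add ⟨k, fun i => c i * β i, β, v, hβv, fun t ht => rfl⟩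
      ⟨k, c, β, fun i t => t * deriv (v i) t,
        fun i => ⟨(hβv i).1, SBNZ.delta (hβv i).2⟩, fun t ht => rfl⟩
  · have heq : u =ᶠ[nhds t] (fun t => ∑ i, c i * t ^ β i * v i t) :=
      Filter.eventuallyEq_of_mem (isOpen_Ioo.mem_nhds ht) (fun s hs => hrep s hs)
    have hS : HasDerivAt (fun t => ∑ i, c i * t ^ β i * v i t)
        (∑ i, (c i * (β i * t ^ (β i - 1)) * v i t + c i * t ^ β i * deriv (v i) t)) t :=
      HasDerivAt.fun_sum (fun i _ => hterm t ht i)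
    refine ⟨heq.differentiableAt_iff.mpr hS.differentiableAt, ?_⟩
    dsimp only
    rw [heq.deriv_eq, hS.deriv, Finset.mul_sum, ← Finset.sum_add_distrib]
    refine Finset.sum_congr rfl fun i _ => ?_
    have hpow : t ^ β i = t ^ (β i - 1) * t := by
      rw [← Real.rpow_add_one ht.1.ne']; norm_num
    rw [hpow]; ring

theorem memF_delta (g : ℝ → ℝ) (hg : MemF g) :
    MemF (fun t => t * deriv g t) := by
  obtain ⟨k, c, β, u, v, hprop, hrep⟩ := hg
  choose du hduP hdu using fun i => memP_delta (hprop i).2.1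
  choose dv hdvP hdv using fun i => memP_delta (hprop i).2.2.1
  refine ⟨k, c, β,
    fun i t => (β i - 1) * (u i t * v i t) + (du i t * v i t - u i t * dv i t),
    fun i t => v i t * v i t,
    fun i => ⟨(hprop i).1,
      memP_add (memP_smul _ (memP_mul (hprop i).2.1 (hprop i).2.2.1))
        (memP_sub (memP_mul (hduP i) (hprop i).2.2.1)
          (memP_mul (hprop i).2.1 (hdvP i))),
      memP_mul (hprop i).2.2.1 (hprop i).2.2.1,
      fun t ht => mul_ne_zero ((hprop i).2.2.2 t ht) ((hprop i).2.2.2 t ht)⟩,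
    fun t ht => ?_⟩
  have hterm : ∀ i : Fin k, HasDerivAt (fun s => c i * s ^ (β i - 1) * u i s / v i s)
      (((c i * ((β i - 1) * t ^ (β i - 1 - 1)) * u i t +
          c i * t ^ (β i - 1) * deriv (u i) t) * v i t
        - c i * t ^ (β i - 1) * u i t * deriv (v i) t) / (v i t) ^ 2) t := by
    intro i
    have hA : HasDerivAt (fun s : ℝ => c i * s ^ (β i - 1) * u i s)
        (c i * ((β i - 1) * t ^ (β i - 1 - 1)) * u i t +
          c i * t ^ (β i - 1) * deriv (u i) t) t :=
      ((Real.hasDerivAt_rpow_const (Or.inl ht.1.ne')).const_mul (c i)).mul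
        ((hdu i t ht).1.hasDerivAt)
    exact hA.div ((hdv i t ht).1.hasDerivAt) ((hprop i).2.2.2 t ht)
  have heq : g =ᶠ[nhds t] (fun s => ∑ i, c i * s ^ (β i - 1) * u i s / v i s) :=
    Filter.eventuallyEq_of_mem (isOpen_Ioo.mem_nhds ht) (fun s hs => hrep s hs)
  have hS : HasDerivAt (fun s => ∑ i, c i * s ^ (β i - 1) * u i s / v i s)
      (∑ i, (((c i * ((β i - 1) * t ^ (β i - 1 - 1)) * u i t +
          c i * t ^ (β i - 1) * deriv (u i) t) * v i t
        - c i * t ^ (β i - 1) * u i t * deriv (v i) t) / (v i t) ^ 2)) t :=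
    HasDerivAt.fun_sum (fun i _ => hterm i)
  dsimp only
  rw [heq.deriv_eq, hS.deriv, Finset.mul_sum]
  refine Finset.sum_congr rfl fun i _ => ?_
  have hv0 := (hprop i).2.2.2 t ht
  rw [← (hdu i t ht).2, ← (hdv i t ht).2]
  have hpow : t ^ (β i - 1) = t ^ (β i - 1 - 1) * t := by
    rw [← Real.rpow_add_one ht.1.ne']; norm_num
  rw [hpow]
  field_simp
  ring
end

section
/- Let 𝒫 be the class of functions on (0,1) that are finite linear combinations of functions of the form t ↦ t^β v(t), where β > 0 and v is infinitely differentiable on (0,1) with all derivatives bounded near t = 0; let ℱ be the linear span of functions of the form t ↦ t^{β−1} u(t)/v(t) with β > 0 and u, v ∈ 𝒫 (v nonvanishing on (0,1)). Then for every g ∈ ℱ and every α > 0, the Riemann–Liouville fractional integral I^α[g](x) = (1/Γ(α)) ∫₀ˣ (x−t)^{α−1} g(t) dt is infinitely differentiable on (0,1). -/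
open MeasureTheory Real Set Filter

section Aux

/-- Bound for `rpow` on a positive interval. -/
lemma rpow_le_max_s12 {δ R r q : ℝ} (hδ : 0 < δ) (h1 : δ ≤ r) (h2 : r ≤ R) :
    r ^ q ≤ max (δ ^ q) (R ^ q) := by
  rcases le_or_gt 0 q with hq | hq
  · exact le_max_of_le_right (Real.rpow_le_rpow (hδ.le.trans h1) h2 hq)
  · exact le_max_of_le_left (Real.rpow_le_rpow_of_nonpos hδ h1 hq.le)

lemma chain_contDiffOn {S : Set ℝ} (hS : IsOpen S) (K : ℕ → ℝ → ℝ)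
    (h : ∀ m, ∀ x ∈ S, HasDerivAt (K m) (K (m + 1) x) x) :
    ContDiffOn ℝ (⊤ : ℕ∞) (K 0) S := by
  have main : ∀ n : ℕ, ∀ K : ℕ → ℝ → ℝ,
      (∀ m, ∀ x ∈ S, HasDerivAt (K m) (K (m + 1) x) x) →
      ContDiffOn ℝ n (K 0) S := by
    intro n
    induction n with
    | zero =>
      intro K hK
      rw [Nat.cast_zero, contDiffOn_zero]
      exact fun x hx => ((hK 0 x hx).continuousAt).continuousWithinAt
    | succ n ih =>
      intro K hK
      have hd : DifferentiableOn ℝ (K 0) S := fun x hx =>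
        ((hK 0 x hx).differentiableAt).differentiableWithinAt
      have hderiv : ContDiffOn ℝ n (deriv (K 0)) S := by
        refine (ih (fun m => K (m + 1)) (fun m x hx => hK (m + 1) x hx)).congr ?_
        exact fun x hx => (hK 0 x hx).deriv
      have hcast : ((n + 1 : ℕ) : WithTop ℕ∞) = (n : WithTop ℕ∞) + 1 := by push_cast; rfl
      rw [hcast, contDiffOn_succ_iff_deriv_of_isOpen hS]
      exact ⟨hd, by simp, hderiv⟩
  rw [contDiffOn_infty]
  exact fun n => main n K h

lemma iter_contDiffOn {g : ℝ → ℝ} {U : Set ℝ} (hU : IsOpen U)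
    (h : ContDiffOn ℝ (⊤ : ℕ∞) g U) (m : ℕ) :
    ContDiffOn ℝ (⊤ : ℕ∞) (iteratedDeriv m g) U := by
  induction m with
  | zero => simpa [iteratedDeriv_zero] using h
  | succ m ih =>
    rw [iteratedDeriv_succ]
    exact ih.deriv_of_isOpen hU (by norm_cast)

lemma iter_hasDerivAt {g : ℝ → ℝ} {U : Set ℝ} (hU : IsOpen U)
    (h : ContDiffOn ℝ (⊤ : ℕ∞) g U) (m : ℕ) {x : ℝ} (hx : x ∈ U) :
    HasDerivAt (iteratedDeriv m g) (iteratedDeriv (m + 1) g x) x := by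
  have h1 := iter_contDiffOn hU h m
  have h2 : DifferentiableAt ℝ (iteratedDeriv m g) x :=
    ((h1.differentiableOn (by norm_cast)).differentiableAt (hU.mem_nhds hx))
  rw [iteratedDeriv_succ]
  exact h2.hasDerivAt

end Aux

section Smooth

lemma memP_contDiffOn {u : ℝ → ℝ} (h : MemP u) :
    ContDiffOn ℝ (⊤ : ℕ∞) u (Set.Ioo 0 1) := by
  obtain ⟨k, c, β, v, hv, hu⟩ := h
  have h1 : ContDiffOn ℝ (⊤ : ℕ∞) (fun t => ∑ i, c i * t ^ β i * v i t) (Set.Ioo 0 1) := by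
    apply ContDiffOn.sum
    intro i _
    apply ContDiffOn.mul _ (hv i).2.1
    apply ContDiffOn.mul contDiffOn_const
    intro t ht
    exact (contDiffAt_rpow_const_of_ne (ne_of_gt ht.1)).contDiffWithinAt
  exact h1.congr hu

lemma memF_contDiffOn {g : ℝ → ℝ} (h : MemF g) :
    ContDiffOn ℝ (⊤ : ℕ∞) g (Set.Ioo 0 1) := by
  obtain ⟨k, c, β, u, v, hi, hgf⟩ := h
  have h1 : ContDiffOn ℝ (⊤ : ℕ∞)
      (fun t => ∑ i, c i * t ^ (β i - 1) * u i t / v i t) (Set.Ioo 0 1) := by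
    apply ContDiffOn.sum
    intro i _
    have hnum : ContDiffOn ℝ (⊤ : ℕ∞) (fun t => c i * t ^ (β i - 1) * u i t)
        (Set.Ioo 0 1) := by
      apply ContDiffOn.mul _ (memP_contDiffOn (hi i).2.1)
      apply ContDiffOn.mul contDiffOn_const
      intro t ht
      exact (contDiffAt_rpow_const_of_ne (ne_of_gt ht.1)).contDiffWithinAt
    exact hnum.div (memP_contDiffOn (hi i).2.2.1) (hi i).2.2.2
  exact h1.congr hgf

end Smooth


section Kernel

lemma kernel_int {q : ℝ} (hq : -1 < q) :
    IntegrableOn (fun s : ℝ => (1 - s) ^ q) (Set.Ioo 0 1) := by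
  have h2 := (intervalIntegral.intervalIntegrable_rpow' (a := (1:ℝ)) (b := 0) hq).comp_sub_left 1
  rw [show (1:ℝ) - 1 = 0 by ring, show (1:ℝ) - 0 = 1 by ring] at h2
  exact (intervalIntegrable_iff_integrableOn_Ioo_of_le zero_le_one).mp h2

lemma hasDerivAt_K1 {g : ℝ → ℝ} {a x : ℝ} (c q : ℝ) (h0a : 0 < a) (hax : a < x)
    (hgi : IntegrableOn g (Set.Ioo 0 a)) :
    HasDerivAt (fun y => ∫ t in Set.Ioo 0 a, c * (y - t) ^ q * g t)
      (∫ t in Set.Ioo 0 a, c * q * (x - t) ^ (q - 1) * g t) x := by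
  have hgm : AEStronglyMeasurable g (volume.restrict (Set.Ioo 0 a)) :=
    hgi.aestronglyMeasurable
  set ε := (x - a) / 2 with hεdef
  have hε0 : 0 < ε := by
    rw [hεdef]; linarith
  have hgeo : ∀ y ∈ Metric.ball x ε, ∀ t ∈ Set.Ioo (0:ℝ) a, ε ≤ y - t ∧ y - t ≤ x + ε := by
    intro y hy t ht
    rw [Metric.mem_ball, Real.dist_eq, abs_lt] at hy
    constructor
    · rw [hεdef] at *; linarith [ht.2]
    · linarith [ht.1, hy.2]
  have key := hasDerivAt_integral_of_dominated_loc_of_deriv_le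
    (μ := volume.restrict (Set.Ioo 0 a)) (x₀ := x)
    (F := fun y t => c * (y - t) ^ q * g t)
    (F' := fun y t => c * q * (y - t) ^ (q - 1) * g t)
    (bound := fun t => (|c * q| * max (ε ^ (q - 1)) ((x + ε) ^ (q - 1))) * ‖g t‖)
    (Metric.ball_mem_nhds x hε0)
    (Filter.Eventually.of_forall fun y =>
      ((by fun_prop : Measurable fun t : ℝ => c * (y - t) ^ q).aestronglyMeasurable).mul hgm)
    ?_ (((by fun_prop : Measurable fun t : ℝ => c * q * (x - t) ^ (q - 1)).aestronglyMeasurable).mul hgm)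
    ?_ ((hgi.norm.const_mul _)) ?_
  · exact key.2
  · -- integrability of F x
    apply Integrable.bdd_mul (c := |c| * max (ε ^ q) ((x + ε) ^ q)) hgi
      ((by fun_prop : Measurable fun t : ℝ => c * (x - t) ^ q).aestronglyMeasurable)
    rw [ae_restrict_iff' measurableSet_Ioo]
    refine Filter.Eventually.of_forall fun t ht => ?_
    obtain ⟨hl, hr⟩ := hgeo x (Metric.mem_ball_self hε0) t ht
    have hb : (0:ℝ) < x - t := lt_of_lt_of_le hε0 hl
    rw [Real.norm_eq_abs, abs_mul, abs_of_nonneg (Real.rpow_nonneg hb.le q)]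
    exact mul_le_mul_of_nonneg_left (rpow_le_max_s12 hε0 hl hr) (abs_nonneg c)
  · -- bound for F'
    rw [ae_restrict_iff' measurableSet_Ioo]
    refine Filter.Eventually.of_forall fun t ht y hy => ?_
    obtain ⟨hl, hr⟩ := hgeo y hy t ht
    have hb : (0:ℝ) < y - t := lt_of_lt_of_le hε0 hl
    have hm : |(y - t) ^ (q - 1)| ≤ max (ε ^ (q - 1)) ((x + ε) ^ (q - 1)) := by
      rw [abs_of_nonneg (Real.rpow_nonneg hb.le _)]
      exact rpow_le_max_s12 hε0 hl hr
    simp only [Real.norm_eq_abs, abs_mul]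
    calc |c| * |q| * |(y - t) ^ (q - 1)| * |g t|
        ≤ |c| * |q| * max (ε ^ (q - 1)) ((x + ε) ^ (q - 1)) * |g t| := by
          gcongr
        _ = |c| * |q| * max (ε ^ (q - 1)) ((x + ε) ^ (q - 1)) * |g t| := rfl
  · -- derivative
    rw [ae_restrict_iff' measurableSet_Ioo]
    refine Filter.Eventually.of_forall fun t ht y hy => ?_
    obtain ⟨hl, _⟩ := hgeo y hy t ht
    have hb : y - t ≠ 0 := (lt_of_lt_of_le hε0 hl).ne'
    have h1 : HasDerivAt (fun y : ℝ => y - t) 1 y := (hasDerivAt_id y).sub_const t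
    have h2 : HasDerivAt (fun y : ℝ => (y - t) ^ q) (q * (y - t) ^ (q - 1) * 1) y :=
      by simpa using h1.rpow_const (p := q) (Or.inl hb)
    have h3 := (h2.const_mul c).mul_const (g t)
    exact h3.congr_deriv (by ring)

end Kernel

section K2

lemma hasDerivAt_K2 {g : ℝ → ℝ} {a y q : ℝ} (ha : 0 < a) (hq : -1 < q)
    (hgc : ∀ m, ContinuousOn (iteratedDeriv m g) (Set.Ioo 0 1))
    (hgd : ∀ m, ∀ x ∈ Set.Ioo (0:ℝ) 1,
      HasDerivAt (iteratedDeriv m g) (iteratedDeriv (m + 1) g x) x)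
    (m : ℕ) (hy : y ∈ Set.Ioo 0 (1 - a)) :
    HasDerivAt
      (fun z => ∫ s in Set.Ioo (0:ℝ) 1,
        s ^ m * iteratedDeriv m g (a + z * s) * (1 - s) ^ q)
      (∫ s in Set.Ioo (0:ℝ) 1,
        s ^ (m + 1) * iteratedDeriv (m + 1) g (a + y * s) * (1 - s) ^ q) y := by
  obtain ⟨hy0, hy1⟩ := hy
  set ε := min y (1 - a - y) / 2 with hεdef
  have hmin1 := min_le_left y (1 - a - y)
  have hmin2 := min_le_right y (1 - a - y)
  have hε0 : 0 < ε := by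
    have : 0 < min y (1 - a - y) := lt_min hy0 (by linarith)
    rw [hεdef]; linarith
  have hb1 : a + y + ε < 1 := by rw [hεdef]; linarith
  have hab : a ≤ a + y + ε := by linarith
  have hsub : Set.Icc a (a + y + ε) ⊆ Set.Ioo (0:ℝ) 1 :=
    fun t ht => ⟨lt_of_lt_of_le ha ht.1, lt_of_le_of_lt ht.2 hb1⟩
  have hzball : ∀ z ∈ Metric.ball y ε, 0 < z ∧ z ≤ y + ε := by
    intro z hz
    rw [Metric.mem_ball, Real.dist_eq, abs_lt] at hz
    constructor
    · rw [hεdef] at *; linarith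
    · linarith [hz.2]
  have hmem : ∀ z ∈ Metric.ball y ε, ∀ s ∈ Set.Ioo (0:ℝ) 1,
      a + z * s ∈ Set.Ioo (0:ℝ) 1 ∧ a + z * s ∈ Set.Icc a (a + y + ε) := by
    intro z hz s hs
    obtain ⟨hz0, hz1⟩ := hzball z hz
    obtain ⟨hs0, hs1⟩ := hs
    have h1 : 0 < z * s := mul_pos hz0 hs0
    have h2 : z * s ≤ z := by nlinarith
    exact ⟨⟨by linarith, by nlinarith⟩, ⟨by linarith, by nlinarith⟩⟩
  obtain ⟨C, hC⟩ := isCompact_Icc.exists_bound_of_continuousOn ((hgc (m + 1)).mono hsub)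
  obtain ⟨D, hD⟩ := isCompact_Icc.exists_bound_of_continuousOn ((hgc m).mono hsub)
  have kernelCont : ContinuousOn (fun s : ℝ => (1 - s) ^ q) (Set.Ioo 0 1) := by
    apply ContinuousOn.rpow_const (continuous_const.sub continuous_id).continuousOn
    exact fun s hs => Or.inl (by show (1:ℝ) - s ≠ 0; intro h; nlinarith [hs.2, sub_eq_zero.mp h])
  have hmeas : ∀ (m' : ℕ), ∀ z ∈ Metric.ball y ε,
      AEStronglyMeasurable
        (fun s => s ^ m' * iteratedDeriv m' g (a + z * s) * (1 - s) ^ q)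
        (volume.restrict (Set.Ioo 0 1)) := by
    intro m' z hz
    refine ContinuousOn.aestronglyMeasurable ?_ measurableSet_Ioo
    refine ContinuousOn.mul (ContinuousOn.mul (continuous_pow m').continuousOn ?_) kernelCont
    exact (hgc m').comp (continuous_const.add (continuous_const.mul continuous_id)).continuousOn
      (fun s hs => (hmem z hz s hs).1)
  have key := hasDerivAt_integral_of_dominated_loc_of_deriv_le
    (μ := volume.restrict (Set.Ioo (0:ℝ) 1)) (x₀ := y)
    (F := fun z s => s ^ m * iteratedDeriv m g (a + z * s) * (1 - s) ^ q)
    (F' := fun z s => s ^ (m + 1) * iteratedDeriv (m + 1) g (a + z * s) * (1 - s) ^ q)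
    (bound := fun s => C * (1 - s) ^ q)
    (Metric.ball_mem_nhds y hε0)
    (Filter.eventually_of_mem (Metric.ball_mem_nhds y hε0) (fun z hz => hmeas m z hz))
    ?_ (hmeas (m + 1) y (Metric.mem_ball_self hε0)) ?_ ((kernel_int hq).const_mul C) ?_
  · exact key.2
  · -- integrability of F y
    apply Integrable.bdd_mul (c := D) (kernel_int hq)
    · refine ContinuousOn.aestronglyMeasurable ?_ measurableSet_Ioo
      refine ContinuousOn.mul (continuous_pow m).continuousOn ?_
      exact (hgc m).comp (continuous_const.add (continuous_const.mul continuous_id)).continuousOn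
        (fun s hs => (hmem y (Metric.mem_ball_self hε0) s hs).1)
    · rw [ae_restrict_iff' measurableSet_Ioo]
      refine Filter.Eventually.of_forall fun s hs => ?_
      have hmemy := (hmem y (Metric.mem_ball_self hε0) s hs).2
      have h1 : ‖iteratedDeriv m g (a + y * s)‖ ≤ D := hD _ hmemy
      have hsm : |s ^ m| ≤ 1 := by
        rw [abs_pow]
        exact pow_le_one₀ (abs_nonneg s) (abs_le.mpr ⟨by linarith [hs.1], hs.2.le⟩)
      rw [Real.norm_eq_abs, abs_mul]
      calc |s ^ m| * |iteratedDeriv m g (a + y * s)| ≤ 1 * D := by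
            exact mul_le_mul hsm h1 (abs_nonneg _) zero_le_one
        _ = D := one_mul D
  · -- bound for F'
    rw [ae_restrict_iff' measurableSet_Ioo]
    refine Filter.Eventually.of_forall fun s hs z hz => ?_
    have hmemz := (hmem z hz s hs).2
    have h1 : ‖iteratedDeriv (m + 1) g (a + z * s)‖ ≤ C := hC _ hmemz
    have hC0 : 0 ≤ C := le_trans (norm_nonneg _) (hC a ⟨le_refl a, hab⟩)
    have hk0 : 0 ≤ (1 - s) ^ q := Real.rpow_nonneg (by linarith [hs.2]) q
    have hsm : |s ^ (m + 1)| ≤ 1 := by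
      rw [abs_pow]
      exact pow_le_one₀ (abs_nonneg s) (abs_le.mpr ⟨by linarith [hs.1], hs.2.le⟩)
    rw [Real.norm_eq_abs, abs_mul, abs_mul, abs_of_nonneg hk0]
    calc |s ^ (m + 1)| * |iteratedDeriv (m + 1) g (a + z * s)| * (1 - s) ^ q
        ≤ 1 * C * (1 - s) ^ q := by
          apply mul_le_mul_of_nonneg_right _ hk0
          exact mul_le_mul hsm h1 (abs_nonneg _) zero_le_one
      _ = C * (1 - s) ^ q := by ring
  · -- derivative
    rw [ae_restrict_iff' measurableSet_Ioo]
    refine Filter.Eventually.of_forall fun s hs z hz => ?_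
    have hmemz := (hmem z hz s hs).1
    have inner : HasDerivAt (fun z : ℝ => a + z * s) s z := by
      simpa using ((hasDerivAt_id z).mul_const s).const_add a
    have hcomp := (hgd m _ hmemz).comp z inner
    have final := (hcomp.const_mul (s ^ m)).mul_const ((1 - s) ^ q)
    exact final.congr_deriv (by ring)

end K2

section Junk

lemma junk_case {g : ℝ → ℝ} {α : ℝ} (hα : 0 < α)
    (hgc : ContinuousOn g (Set.Ioo 0 1))
    (hni : ¬ IntegrableOn g (Set.Ioo 0 (1/2)))
    {x : ℝ} (hx : x ∈ Set.Ioo (0:ℝ) 1) :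
    ¬ IntervalIntegrable (fun t => (x - t) ^ (α - 1) * g t) volume 0 x := by
  obtain ⟨hx0, hx1⟩ := hx
  intro h
  apply hni
  have h1 : IntegrableOn (fun t => (x - t) ^ (α - 1) * g t) (Set.Ioo 0 (x / 2)) volume :=
    ((intervalIntegrable_iff_integrableOn_Ioo_of_le hx0.le).mp h).mono_set
      (Set.Ioo_subset_Ioo le_rfl (by linarith))
  have h2 : IntegrableOn g (Set.Ioo 0 (x / 2)) volume := by
    have h3 : Integrable
        (fun t => (x - t) ^ (1 - α) * ((x - t) ^ (α - 1) * g t))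
        (volume.restrict (Set.Ioo 0 (x / 2))) := by
      apply Integrable.bdd_mul (c := max ((x / 2) ^ (1 - α)) (x ^ (1 - α))) h1
        (by fun_prop : Measurable fun t : ℝ => (x - t) ^ (1 - α)).aestronglyMeasurable
      rw [ae_restrict_iff' measurableSet_Ioo]
      refine Filter.Eventually.of_forall fun t ht => ?_
      have hb : (0:ℝ) < x / 2 := by linarith
      have hl : x / 2 ≤ x - t := by linarith [ht.2]
      have hr : x - t ≤ x := by linarith [ht.1]
      rw [Real.norm_eq_abs, abs_of_nonneg (Real.rpow_nonneg (by linarith) _)]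
      exact rpow_le_max_s12 hb hl hr
    apply h3.congr
    rw [Filter.EventuallyEq, ae_restrict_iff' measurableSet_Ioo]
    refine Filter.Eventually.of_forall fun t ht => ?_
    have hb : (0:ℝ) < x - t := by linarith [ht.2]
    rw [← mul_assoc, ← Real.rpow_add hb]
    norm_num
  have h4 : IntegrableOn g (Set.Icc (x / 2) (1 / 2)) volume := by
    apply ContinuousOn.integrableOn_Icc
    exact hgc.mono (fun t ht => ⟨by linarith [ht.1], by linarith [ht.2]⟩)
  exact (h2.union h4).mono_set (fun t ht => by
    rcases le_or_gt (x / 2) t with h | h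
    · exact Or.inr ⟨h, ht.2.le⟩
    · exact Or.inl ⟨ht.1, h⟩)

end Junk

section Main

noncomputable def K1fun (g : ℝ → ℝ) (α a : ℝ) (m : ℕ) (x : ℝ) : ℝ :=
  ∫ t in Set.Ioo 0 a, (∏ j ∈ Finset.range m, (α - 1 - j)) * (x - t) ^ (α - 1 - m) * g t

noncomputable def K2fun (g : ℝ → ℝ) (α a : ℝ) (m : ℕ) (z : ℝ) : ℝ :=
  ∫ s in Set.Ioo (0:ℝ) 1, s ^ m * iteratedDeriv m g (a + z * s) * (1 - s) ^ (α - 1)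

lemma K1_smooth {g : ℝ → ℝ} {α a : ℝ} (h0a : 0 < a)
    (hgi : IntegrableOn g (Set.Ioo 0 a)) :
    ContDiffOn ℝ (⊤ : ℕ∞) (K1fun g α a 0) (Set.Ioo a 1) := by
  apply chain_contDiffOn isOpen_Ioo
  intro m x hx
  have H := hasDerivAt_K1 (g := g) (∏ j ∈ Finset.range m, (α - 1 - (j:ℝ)))
    (α - 1 - m) h0a hx.1 hgi
  have hv : K1fun g α a (m + 1) x
      = ∫ t in Set.Ioo 0 a, (∏ j ∈ Finset.range m, (α - 1 - (j:ℝ))) * (α - 1 - m)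
          * (x - t) ^ (α - 1 - m - 1) * g t := by
    unfold K1fun
    congr 1
    funext t
    rw [Finset.prod_range_succ]
    push_cast
    rw [show α - 1 - ((m:ℝ) + 1) = α - 1 - m - 1 from by ring]
  rw [hv]
  exact H

lemma K2_smooth {g : ℝ → ℝ} {α a : ℝ} (h0a : 0 < a) (hα : 0 < α)
    (hgc : ∀ m, ContinuousOn (iteratedDeriv m g) (Set.Ioo 0 1))
    (hgd : ∀ m, ∀ x ∈ Set.Ioo (0:ℝ) 1,
      HasDerivAt (iteratedDeriv m g) (iteratedDeriv (m + 1) g x) x) :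
    ContDiffOn ℝ (⊤ : ℕ∞) (K2fun g α a 0) (Set.Ioo 0 (1 - a)) := by
  apply chain_contDiffOn isOpen_Ioo
  intro m z hz
  exact hasDerivAt_K2 h0a (by linarith) hgc hgd m hz

lemma rl_eq {g : ℝ → ℝ} {α a x : ℝ} (hα : 0 < α) (h0a : 0 < a)
    (hgi : IntegrableOn g (Set.Ioo 0 a))
    (hgc : ContinuousOn g (Set.Ioo 0 1))
    (hx : x ∈ Set.Ioo a 1) :
    rlInt α g x
      = (1 / Real.Gamma α) * (K1fun g α a 0 x + (x - a) ^ α * K2fun g α a 0 (x - a)) := by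
  obtain ⟨hax, hx1⟩ := hx
  have hx0 : 0 < x := h0a.trans hax
  have I1 : IntervalIntegrable (fun t => (x - t) ^ (α - 1) * g t) volume 0 a := by
    rw [intervalIntegrable_iff_integrableOn_Ioo_of_le h0a.le]
    apply Integrable.bdd_mul (c := max ((x - a) ^ (α - 1)) (x ^ (α - 1))) hgi
      (by fun_prop : Measurable fun t : ℝ => (x - t) ^ (α - 1)).aestronglyMeasurable
    rw [ae_restrict_iff' measurableSet_Ioo]
    refine Filter.Eventually.of_forall fun t ht => ?_
    rw [Real.norm_eq_abs, abs_of_nonneg (Real.rpow_nonneg (by linarith [ht.2]) _)]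
    exact rpow_le_max_s12 (by linarith) (by linarith [ht.2]) (by linarith [ht.1])
  have I2 : IntervalIntegrable (fun t => (x - t) ^ (α - 1) * g t) volume a x := by
    have h2k := (intervalIntegral.intervalIntegrable_rpow' (a := x - a) (b := 0)
      (by linarith : (-1:ℝ) < α - 1)).comp_sub_left x
    rw [show x - (x - a) = a from by ring, sub_zero] at h2k
    apply h2k.mul_continuousOn
    rw [Set.uIcc_of_le hax.le]
    exact hgc.mono (fun t ht => ⟨lt_of_lt_of_le h0a ht.1, lt_of_le_of_lt ht.2 hx1⟩)
  have E1 : ∫ t in (0:ℝ)..a, (x - t) ^ (α - 1) * g t = K1fun g α a 0 x := by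
    rw [intervalIntegral.integral_of_le h0a.le, integral_Ioc_eq_integral_Ioo]
    unfold K1fun
    refine setIntegral_congr_fun measurableSet_Ioo fun t ht => ?_
    norm_num
  have E2 : ∫ t in a..x, (x - t) ^ (α - 1) * g t
      = (x - a) ^ α * K2fun g α a 0 (x - a) := by
    rw [intervalIntegral.integral_of_le hax.le, integral_Ioc_eq_integral_Ioo]
    have hxa : (0:ℝ) < x - a := by linarith
    have himg : (fun s : ℝ => a + (x - a) * s) '' Set.Ioo 0 1 = Set.Ioo a x := by
      ext u
      simp only [Set.mem_image, Set.mem_Ioo]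
      constructor
      · rintro ⟨s, ⟨hs0, hs1⟩, rfl⟩
        constructor <;> nlinarith
      · rintro ⟨h1, h2⟩
        refine ⟨(u - a) / (x - a), ⟨div_pos (by linarith) hxa,
          (div_lt_one hxa).mpr (by linarith)⟩, ?_⟩
        field_simp
        ring
    have hinj : Set.InjOn (fun s : ℝ => a + (x - a) * s) (Set.Ioo 0 1) := by
      intro u _ v _ h
      simp only at h
      exact mul_left_cancel₀ hxa.ne' (by linarith)
    have hder : ∀ s ∈ Set.Ioo (0:ℝ) 1,
        HasDerivWithinAt (fun s : ℝ => a + (x - a) * s) (x - a) (Set.Ioo 0 1) s := by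
      intro s _
      exact (by simpa using ((hasDerivAt_id s).const_mul (x - a)).const_add a :
        HasDerivAt (fun s : ℝ => a + (x - a) * s) (x - a) s).hasDerivWithinAt
    rw [← himg, integral_image_eq_integral_abs_deriv_smul measurableSet_Ioo hder hinj]
    unfold K2fun
    rw [show (x - a) ^ α * ∫ s in Set.Ioo (0:ℝ) 1,
          s ^ 0 * iteratedDeriv 0 g (a + (x - a) * s) * (1 - s) ^ (α - 1)
        = ∫ s in Set.Ioo (0:ℝ) 1, (x - a) ^ α *
          (s ^ 0 * iteratedDeriv 0 g (a + (x - a) * s) * (1 - s) ^ (α - 1)) from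
      (MeasureTheory.integral_const_mul _ _).symm]
    refine setIntegral_congr_fun measurableSet_Ioo fun s hs => ?_
    obtain ⟨hs0, hs1⟩ := hs
    have hpow : (x - a) ^ α = (x - a) * (x - a) ^ (α - 1) := by
      nth_rewrite 1 [show α = 1 + (α - 1) from by ring]
      rw [Real.rpow_add hxa, Real.rpow_one]
    rw [smul_eq_mul, abs_of_pos hxa, iteratedDeriv_zero, pow_zero,
      show x - (a + (x - a) * s) = (x - a) * (1 - s) from by ring,
      Real.mul_rpow hxa.le (by linarith), hpow]
    ring
  simp only [rlInt]
  rw [← intervalIntegral.integral_add_adjacent_intervals I1 I2, E1, E2]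


theorem memF_rlInt_smooth (g : ℝ → ℝ) (hg : MemF g) (α : ℝ) (hα : 0 < α) :
    ContDiffOn ℝ (⊤ : ℕ∞) (rlInt α g) (Set.Ioo 0 1) := by
  have hgs := memF_contDiffOn hg
  have hgc : ∀ m, ContinuousOn (iteratedDeriv m g) (Set.Ioo 0 1) := fun m =>
    (iter_contDiffOn isOpen_Ioo hgs m).continuousOn
  have hgd : ∀ m, ∀ x ∈ Set.Ioo (0:ℝ) 1,
      HasDerivAt (iteratedDeriv m g) (iteratedDeriv (m + 1) g x) x :=
    fun m x hx => iter_hasDerivAt isOpen_Ioo hgs m hx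
  by_cases hint : IntegrableOn g (Set.Ioo 0 (1/2)) volume
  · apply contDiffOn_of_locally_contDiffOn
    intro x₀ hx₀
    obtain ⟨hx₀0, hx₀1⟩ := hx₀
    refine ⟨Set.Ioo (x₀ / 2) 1, isOpen_Ioo, ⟨by linarith, hx₀1⟩, ?_⟩
    set a := x₀ / 2 with hadef
    have h0a : 0 < a := by rw [hadef]; linarith
    have hgi : IntegrableOn g (Set.Ioo 0 a) :=
      hint.mono_set (Set.Ioo_subset_Ioo le_rfl (by rw [hadef]; linarith))
    have hΦ : ContDiffOn ℝ (⊤ : ℕ∞)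
        (fun x => (1 / Real.Gamma α) *
          (K1fun g α a 0 x + (x - a) ^ α * K2fun g α a 0 (x - a)))
        (Set.Ioo a 1) := by
      apply ContDiffOn.mul contDiffOn_const
      apply ContDiffOn.add (K1_smooth h0a hgi)
      apply ContDiffOn.mul
      · intro x hx
        exact ((contDiffAt_rpow_const_of_ne (sub_ne_zero.mpr hx.1.ne')).comp x
          ((contDiff_id.sub contDiff_const).contDiffAt)).contDiffWithinAt
      · exact (K2_smooth h0a hα hgc hgd).comp
          ((contDiff_id.sub contDiff_const).contDiffOn)
          (fun x hx => ⟨sub_pos.mpr hx.1, by linarith [hx.2]⟩)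
    refine (hΦ.mono Set.inter_subset_right).congr fun x hx => ?_
    exact rl_eq hα h0a hgi hgs.continuousOn hx.2
  · have hzero : ∀ x ∈ Set.Ioo (0:ℝ) 1, rlInt α g x = 0 := by
      intro x hx
      simp only [rlInt]
      rw [intervalIntegral.integral_undef (junk_case hα hgs.continuousOn hint hx), mul_zero]
    exact (contDiffOn_const (c := (0:ℝ))).congr hzero
end Main
end

section
/- Let 1/2 < γ < 1, and define h_γ(t) = (sin(γπ)/π) · (γ/(1−γ)) · t^γ / [(1−t)^{2γ} + t^{2γ} − 2 t^γ (1−t)^γ cos(γπ)] for 0 < t < 1. Then the function t ↦ γ h_γ′(t) + t h_γ″(t) satisfies [γ h_γ′(t) + t h_γ″(t)] / [ (sin(γπ)/π) · (γ²(2γ−1)/(1−γ)) · t^{γ−1} ] → 1 as t → 0+, where h_γ′ and h_γ″ are the first and second derivatives of h_γ. -/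
open MeasureTheory Real Set Filter

/-- The function `h_γ` from Yano--Yano. -/
noncomputable def hDens (γ t : ℝ) : ℝ :=
  (Real.sin (γ * Real.pi) / Real.pi) * (γ / (1 - γ)) * t ^ γ /
    ((1 - t) ^ (2 * γ) + t ^ (2 * γ)
      - 2 * t ^ γ * (1 - t) ^ γ * Real.cos (γ * Real.pi))

noncomputable def Kc (γ : ℝ) : ℝ := Real.sin (γ * Real.pi) / Real.pi * (γ / (1 - γ))

noncomputable def Df (γ t : ℝ) : ℝ :=
  (1 - t) ^ (2 * γ) + t ^ (2 * γ) - 2 * t ^ γ * (1 - t) ^ γ * Real.cos (γ * Real.pi)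

noncomputable def Df1 (γ t : ℝ) : ℝ :=
  (2*γ) * t ^ (2*γ - 1) - (2*γ) * (1 - t) ^ (2*γ - 1)
    - 2 * Real.cos (γ * Real.pi) * (γ * t ^ (γ-1) * (1-t)^γ - γ * t^γ * (1-t)^(γ-1))

noncomputable def Df2 (γ t : ℝ) : ℝ :=
  (2*γ)*(2*γ-1) * t ^ (2*γ-2) + (2*γ)*(2*γ-1) * (1-t) ^ (2*γ-2)
    - 2 * Real.cos (γ * Real.pi) *
      (γ*(γ-1) * t^(γ-2) * (1-t)^γ - 2*γ^2 * t^(γ-1)*(1-t)^(γ-1) + γ*(γ-1)*t^γ*(1-t)^(γ-2))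

noncomputable def Af (γ t : ℝ) : ℝ :=
  Kc γ * (γ * t ^ (γ-1)) * Df γ t - Kc γ * t ^ γ * Df1 γ t

noncomputable def H1 (γ t : ℝ) : ℝ := Af γ t / (Df γ t)^2

noncomputable def H2 (γ t : ℝ) : ℝ :=
  ((Kc γ * (γ*(γ-1)*t^(γ-2)) * Df γ t - Kc γ * t^γ * Df2 γ t) * (Df γ t)^2
    - Af γ t * (2 * Df γ t * Df1 γ t)) / ((Df γ t)^2)^2

lemma hasDerivAt_one_sub_rpow (p t : ℝ) (ht : t < 1) :
    HasDerivAt (fun s : ℝ => (1 - s) ^ p) (-(p * (1 - t) ^ (p-1))) t := by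
  have h : HasDerivAt (fun s : ℝ => 1 - s) (-1) t := by
    exact (hasDerivAt_id t).const_sub 1
  have := (Real.hasDerivAt_rpow_const (p := p) (x := 1 - t)
    (Or.inl (by linarith))).comp t h
  convert this using 1
  · rfl
  · rfl
  · rfl
  ring

lemma hasDerivAt_rpow' (p t : ℝ) (ht : 0 < t) :
    HasDerivAt (fun s : ℝ => s ^ p) (p * t ^ (p-1)) t :=
  Real.hasDerivAt_rpow_const (Or.inl ht.ne')

lemma hasDerivAt_Df (γ t : ℝ) (ht0 : 0 < t) (ht1 : t < 1) :
    HasDerivAt (Df γ) (Df1 γ t) t := by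
  have h1 := hasDerivAt_one_sub_rpow (2*γ) t ht1
  have h2 := hasDerivAt_rpow' (2*γ) t ht0
  have h3 := hasDerivAt_rpow' γ t ht0
  have h4 := hasDerivAt_one_sub_rpow γ t ht1
  have hprod : HasDerivAt (fun s : ℝ => 2 * s ^ γ * (1-s)^γ * Real.cos (γ * Real.pi))
      ((2 * (γ * t ^ (γ-1)) * (1-t)^γ + 2 * t^γ * (-(γ * (1-t)^(γ-1)))) * Real.cos (γ * Real.pi)) t := by
    exact (((h3.const_mul 2).mul h4).mul_const _)
  have := (h1.add h2).sub hprod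
  convert this using 1
  · rfl
  · rfl
  · rfl
  unfold Df1
  ring

lemma hasDerivAt_Df1 (γ t : ℝ) (ht0 : 0 < t) (ht1 : t < 1) :
    HasDerivAt (Df1 γ) (Df2 γ t) t := by
  have h1 := hasDerivAt_rpow' (2*γ-1) t ht0
  have h2 := hasDerivAt_one_sub_rpow (2*γ-1) t ht1
  have h3 := hasDerivAt_rpow' (γ-1) t ht0
  have h4 := hasDerivAt_one_sub_rpow γ t ht1
  have h5 := hasDerivAt_rpow' γ t ht0
  have h6 := hasDerivAt_one_sub_rpow (γ-1) t ht1
  have hA : HasDerivAt (fun s : ℝ => γ * s ^ (γ-1) * (1-s)^γ)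
      (γ * ((γ-1) * t ^ (γ-1-1)) * (1-t)^γ + γ * t ^ (γ-1) * (-(γ * (1-t)^(γ-1)))) t :=
    (h3.const_mul γ).mul h4
  have hB : HasDerivAt (fun s : ℝ => γ * s ^ γ * (1-s)^(γ-1))
      (γ * (γ * t ^ (γ-1)) * (1-t)^(γ-1) + γ * t ^ γ * (-((γ-1) * (1-t)^(γ-1-1)))) t :=
    (h5.const_mul γ).mul h6
  have := ((h1.const_mul (2*γ)).sub (h2.const_mul (2*γ))).sub
    ((hA.sub hB).const_mul (2 * Real.cos (γ * Real.pi)))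
  convert this using 1
  · rfl
  · rfl
  · rfl
  unfold Df2
  have e1 : γ - 1 - 1 = γ - 2 := by ring
  have e2 : 2*γ - 1 - 1 = 2*γ - 2 := by ring
  rw [e1, e2]
  ring

lemma Df_pos (γ t : ℝ) (hγ0 : 1/2 < γ) (hγ1 : γ < 1) (ht0 : 0 < t) (ht1 : t < 1) :
    0 < Df γ t := by
  have hcos : Real.cos (γ * Real.pi) ≤ 0 := by
    apply Real.cos_nonpos_of_pi_div_two_le_of_le
    · nlinarith [Real.pi_pos]
    · nlinarith [Real.pi_pos]
  have ha : 0 < t ^ γ := Real.rpow_pos_of_pos ht0 γ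
  have hb : 0 < (1-t) ^ γ := Real.rpow_pos_of_pos (by linarith) γ
  have ha2 : 0 < t ^ (2*γ) := Real.rpow_pos_of_pos ht0 _
  have hb2 : 0 < (1-t) ^ (2*γ) := Real.rpow_pos_of_pos (by linarith) _
  unfold Df
  nlinarith [mul_nonneg (mul_nonneg (mul_nonneg (by norm_num : (0:ℝ) ≤ 2) ha.le) hb.le)
    (neg_nonneg.mpr hcos)]

lemma hasDerivAt_hDens (γ t : ℝ) (hγ0 : 1/2 < γ) (hγ1 : γ < 1) (ht0 : 0 < t) (ht1 : t < 1) :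
    HasDerivAt (hDens γ) (H1 γ t) t := by
  have hD := hasDerivAt_Df γ t ht0 ht1
  have hN : HasDerivAt (fun s : ℝ => Kc γ * s ^ γ) (Kc γ * (γ * t ^ (γ-1))) t :=
    (hasDerivAt_rpow' γ t ht0).const_mul _
  have hDne := (Df_pos γ t hγ0 hγ1 ht0 ht1).ne'
  have := hN.div hD hDne
  exact this

lemma hasDerivAt_Af (γ t : ℝ) (ht0 : 0 < t) (ht1 : t < 1) :
    HasDerivAt (Af γ)
      (Kc γ * (γ*(γ-1)*t^(γ-2)) * Df γ t - Kc γ * t^γ * Df2 γ t) t := by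
  have hD := hasDerivAt_Df γ t ht0 ht1
  have hD1 := hasDerivAt_Df1 γ t ht0 ht1
  have h1 : HasDerivAt (fun s : ℝ => Kc γ * (γ * s ^ (γ-1)))
      (Kc γ * (γ * ((γ-1) * t ^ (γ-1-1)))) t :=
    ((hasDerivAt_rpow' (γ-1) t ht0).const_mul γ).const_mul (Kc γ)
  have h2 : HasDerivAt (fun s : ℝ => Kc γ * s ^ γ) (Kc γ * (γ * t ^ (γ-1))) t :=
    (hasDerivAt_rpow' γ t ht0).const_mul _
  have := (h1.mul hD).sub (h2.mul hD1)
  convert this using 1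
  · rfl
  · rfl
  · rfl
  have e1 : γ - 1 - 1 = γ - 2 := by ring
  rw [e1]
  unfold Df Df1
  ring

lemma hasDerivAt_H1 (γ t : ℝ) (hγ0 : 1/2 < γ) (hγ1 : γ < 1) (ht0 : 0 < t) (ht1 : t < 1) :
    HasDerivAt (H1 γ) (H2 γ t) t := by
  have hD := hasDerivAt_Df γ t ht0 ht1
  have hDsq : HasDerivAt (fun s : ℝ => (Df γ s)^2) (2 * Df γ t * Df1 γ t) t := by
    have := hD.pow 2
    convert this using 1
    · rfl
    · rfl
    · rfl
    push_cast
    ring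
  have hDne : (Df γ t)^2 ≠ 0 := pow_ne_zero _ (Df_pos γ t hγ0 hγ1 ht0 ht1).ne'
  have := (hasDerivAt_Af γ t ht0 ht1).div hDsq hDne
  convert this using 1
  · rfl
  · rfl
  · rfl
  · rfl

lemma tendsto_rpow_zero' (p : ℝ) (hp : 0 < p) :
    Tendsto (fun t : ℝ => t ^ p) (nhdsWithin 0 (Set.Ioi 0)) (nhds 0) := by
  have h : ContinuousAt (fun t : ℝ => t ^ p) 0 :=
    continuousAt_id.rpow_const (Or.inr hp.le)
  have := h.tendsto
  rw [Real.zero_rpow hp.ne'] at this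
  exact this.mono_left nhdsWithin_le_nhds

lemma tendsto_one_sub_rpow (p : ℝ) :
    Tendsto (fun t : ℝ => (1 - t) ^ p) (nhdsWithin 0 (Set.Ioi 0)) (nhds 1) := by
  have h : ContinuousAt (fun t : ℝ => (1 - t) ^ p) 0 := by
    apply ContinuousAt.rpow_const
    · exact (continuous_const.sub continuous_id).continuousAt
    · left; norm_num
  have := h.tendsto
  simp only [sub_zero, Real.one_rpow] at this
  exact this.mono_left nhdsWithin_le_nhds

lemma tendsto_id_zero' :
    Tendsto (fun t : ℝ => t) (nhdsWithin 0 (Set.Ioi 0)) (nhds 0) :=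
  (continuous_id.tendsto 0).mono_left nhdsWithin_le_nhds

lemma tendsto_Df (γ : ℝ) (hγ0 : 1/2 < γ) (hγ1 : γ < 1) :
    Tendsto (fun t => Df γ t) (nhdsWithin 0 (Set.Ioi 0)) (nhds 1) := by
  have h1 := tendsto_one_sub_rpow (2*γ)
  have h2 := tendsto_rpow_zero' (2*γ) (by linarith)
  have h3 := tendsto_rpow_zero' γ (by linarith)
  have h4 := tendsto_one_sub_rpow γ
  have := (h1.add h2).sub ((((h3.const_mul 2).mul h4).mul_const (Real.cos (γ * Real.pi))))
  unfold Df
  simpa using this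

lemma tendsto_tDf1 (γ : ℝ) (hγ0 : 1/2 < γ) (hγ1 : γ < 1) :
    Tendsto (fun t => t * Df1 γ t) (nhdsWithin 0 (Set.Ioi 0)) (nhds 0) := by
  have key : Tendsto (fun t : ℝ =>
      (2*γ) * t ^ (2*γ) - (2*γ) * (t * (1 - t) ^ (2*γ - 1))
        - 2 * Real.cos (γ * Real.pi) * (γ * t ^ γ * (1-t)^γ - γ * t^(γ+1) * (1-t)^(γ-1)))
      (nhdsWithin 0 (Set.Ioi 0)) (nhds 0) := by
    have h1 := (tendsto_rpow_zero' (2*γ) (by linarith)).const_mul (2*γ)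
    have h2 := (tendsto_id_zero'.mul (tendsto_one_sub_rpow (2*γ-1))).const_mul (2*γ)
    have h3 := ((tendsto_rpow_zero' γ (by linarith)).const_mul γ).mul (tendsto_one_sub_rpow γ)
    have h4 := ((tendsto_rpow_zero' (γ+1) (by linarith)).const_mul γ).mul (tendsto_one_sub_rpow (γ-1))
    have := (h1.sub h2).sub ((h3.sub h4).const_mul (2 * Real.cos (γ * Real.pi)))
    simpa using this
  apply key.congr'
  filter_upwards [self_mem_nhdsWithin] with t ht
  have htne : t ≠ 0 := ne_of_gt ht
  have e1 : t ^ (2*γ) = t ^ (2*γ-1) * t := by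
    have h := Real.rpow_add_one htne (2*γ-1); rw [show 2*γ-1+1 = 2*γ by ring] at h; exact h
  have e2 : t ^ (γ+1) = t ^ γ * t := Real.rpow_add_one htne γ
  have e3 : t ^ γ = t ^ (γ-1) * t := by
    have h := Real.rpow_add_one htne (γ-1); rw [show γ-1+1 = γ by ring] at h; exact h
  unfold Df1
  rw [e1, e2, e3]
  ring

lemma tendsto_t2Df2 (γ : ℝ) (hγ0 : 1/2 < γ) (hγ1 : γ < 1) :
    Tendsto (fun t => t^2 * Df2 γ t) (nhdsWithin 0 (Set.Ioi 0)) (nhds 0) := by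
  have key : Tendsto (fun t : ℝ =>
      (2*γ)*(2*γ-1) * t ^ (2*γ) + (2*γ)*(2*γ-1) * (t^2 * (1-t) ^ (2*γ-2))
        - 2 * Real.cos (γ * Real.pi) *
          (γ*(γ-1) * t^γ * (1-t)^γ - 2*γ^2 * t^(γ+1)*(1-t)^(γ-1) + γ*(γ-1)*t^(γ+2)*(1-t)^(γ-2)))
      (nhdsWithin 0 (Set.Ioi 0)) (nhds 0) := by
    have h1 := (tendsto_rpow_zero' (2*γ) (by linarith)).const_mul ((2*γ)*(2*γ-1))
    have h2 := (((tendsto_id_zero'.pow 2)).mul (tendsto_one_sub_rpow (2*γ-2))).const_mul ((2*γ)*(2*γ-1))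
    have h3 := ((tendsto_rpow_zero' γ (by linarith)).const_mul (γ*(γ-1))).mul (tendsto_one_sub_rpow γ)
    have h4 := ((tendsto_rpow_zero' (γ+1) (by linarith)).const_mul (2*γ^2)).mul (tendsto_one_sub_rpow (γ-1))
    have h5 := ((tendsto_rpow_zero' (γ+2) (by linarith)).const_mul (γ*(γ-1))).mul (tendsto_one_sub_rpow (γ-2))
    have := (h1.add h2).sub (((h3.sub h4).add h5).const_mul (2 * Real.cos (γ * Real.pi)))
    simpa using this
  apply key.congr'
  filter_upwards [self_mem_nhdsWithin] with t ht
  have htne : t ≠ 0 := ne_of_gt ht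
  have gen : ∀ p : ℝ, t ^ (p+2) = t ^ p * t * t := by
    intro p
    rw [show p+2 = p+1+1 by ring, Real.rpow_add_one htne, Real.rpow_add_one htne]
  have e1 : t ^ (2*γ) = t ^ (2*γ-2) * t * t := by
    have h := gen (2*γ-2); rw [show 2*γ-2+2 = 2*γ by ring] at h; exact h
  have e2 : t ^ (γ+2) = t ^ γ * t * t := gen γ
  have e3 : t ^ (γ+1) = t ^ (γ-1) * t * t := by
    have h := gen (γ-1); rw [show γ-1+2 = γ+1 by ring] at h; exact h
  have e4 : t ^ γ = t ^ (γ-2) * t * t := by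
    have h := gen (γ-2); rw [show γ-2+2 = γ by ring] at h; exact h
  unfold Df2
  rw [e1, e2, e3, e4]
  ring

theorem hDens_comb_asymp (γ : ℝ) (hγ0 : 1 / 2 < γ) (hγ1 : γ < 1) :
    Filter.Tendsto
      (fun t : ℝ =>
        (γ * deriv (hDens γ) t + t * deriv (deriv (hDens γ)) t) /
          ((Real.sin (γ * Real.pi) / Real.pi) *
            (γ ^ 2 * (2 * γ - 1) / (1 - γ)) * t ^ (γ - 1)))
      (nhdsWithin 0 (Set.Ioi 0)) (nhds 1) := by
  have hγ0' : (0:ℝ) < γ := by linarith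
  have h2γ : (0:ℝ) < 2*γ - 1 := by linarith
  have h1γ : (0:ℝ) < 1 - γ := by linarith
  set l := nhdsWithin (0:ℝ) (Set.Ioi 0) with hl
  -- limits of the building blocks
  have hD := tendsto_Df γ hγ0 hγ1
  have hP1 := tendsto_tDf1 γ hγ0 hγ1
  have hP2 := tendsto_t2Df2 γ hγ0 hγ1
  -- the "nice" function
  have hG : Tendsto (fun t =>
    (Df γ t)⁻¹ - 3 * (t * Df1 γ t) / ((2*γ-1) * (Df γ t)^2)
      - (t^2 * Df2 γ t) / (γ*(2*γ-1) * (Df γ t)^2)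
      + 2 * (t * Df1 γ t)^2 / (γ*(2*γ-1) * (Df γ t)^3)) l (nhds 1) := by
    have l1 : Tendsto (fun t => (Df γ t)⁻¹) l (nhds 1⁻¹) := hD.inv₀ one_ne_zero
    have l2 : Tendsto (fun t => 3 * (t * Df1 γ t) / ((2*γ-1) * (Df γ t)^2)) l
        (nhds (3 * 0 / ((2*γ-1) * 1^2))) :=
      (hP1.const_mul 3).div ((hD.pow 2).const_mul (2*γ-1))
        (by rw [one_pow, mul_one]; exact ne_of_gt h2γ)
    have l3 : Tendsto (fun t => (t^2 * Df2 γ t) / (γ*(2*γ-1) * (Df γ t)^2)) l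
        (nhds (0 / (γ*(2*γ-1) * 1^2))) :=
      hP2.div ((hD.pow 2).const_mul (γ*(2*γ-1)))
        (by rw [one_pow, mul_one]; exact (mul_pos hγ0' h2γ).ne')
    have l4 : Tendsto (fun t => 2 * (t * Df1 γ t)^2 / (γ*(2*γ-1) * (Df γ t)^3)) l
        (nhds (2 * 0^2 / (γ*(2*γ-1) * 1^3))) :=
      ((hP1.pow 2).const_mul 2).div ((hD.pow 3).const_mul (γ*(2*γ-1)))
        (by rw [one_pow, mul_one]; exact (mul_pos hγ0' h2γ).ne')
    have := ((l1.sub l2).sub l3).add l4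
    simpa using this
  apply hG.congr'
  have hmem : Set.Ioo (0:ℝ) 1 ∈ l := by
    rw [hl]
    exact Ioo_mem_nhdsGT_of_mem ⟨le_refl 0, one_pos⟩
  filter_upwards [hmem] with t ht
  obtain ⟨ht0, ht1⟩ := ht
  have htne : t ≠ 0 := ne_of_gt ht0
  have hDne : Df γ t ≠ 0 := (Df_pos γ t hγ0 hγ1 ht0 ht1).ne'
  -- identify the derivatives
  have hd1 : deriv (hDens γ) t = H1 γ t := (hasDerivAt_hDens γ t hγ0 hγ1 ht0 ht1).deriv
  have hd2 : deriv (deriv (hDens γ)) t = H2 γ t := by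
    have hev : deriv (hDens γ) =ᶠ[nhds t] H1 γ := by
      filter_upwards [isOpen_Ioo.mem_nhds (⟨ht0, ht1⟩ : t ∈ Set.Ioo (0:ℝ) 1)] with s hs
      exact (hasDerivAt_hDens γ s hγ0 hγ1 hs.1 hs.2).deriv
    rw [hev.deriv_eq]
    exact (hasDerivAt_H1 γ t hγ0 hγ1 ht0 ht1).deriv
  rw [hd1, hd2]
  -- pure algebra
  have hsin : Real.sin (γ * Real.pi) ≠ 0 := by
    apply ne_of_gt
    apply Real.sin_pos_of_pos_of_lt_pi
    · positivity
    · nlinarith [Real.pi_pos]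
  have hbne : t ^ (γ-2) ≠ 0 := (Real.rpow_pos_of_pos ht0 _).ne'
  have gen : ∀ p : ℝ, t ^ (p+1) = t ^ p * t := fun p => Real.rpow_add_one htne p
  have hrw1 : t ^ (γ-1) = t ^ (γ-2) * t := by
    have h := gen (γ-2); rw [show γ-2+1 = γ-1 by ring] at h; exact h
  have hrw2 : t ^ γ = t ^ (γ-2) * t * t := by
    have h1 := gen (γ-1); rw [show γ-1+1 = γ by ring] at h1
    rw [h1, hrw1]
  unfold H1 H2 Af Kc
  rw [hrw1, hrw2]
  set u := t ^ (γ-2) with hu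
  have hπ := Real.pi_ne_zero
  have h2γne : (2*γ-1 : ℝ) ≠ 0 := ne_of_gt h2γ
  have hγne : γ ≠ 0 := ne_of_gt hγ0'
  have h1γne : (1-γ : ℝ) ≠ 0 := ne_of_gt h1γ
  have dA : -Df γ t ^ 2 + Df γ t ^ 2 * γ * 2 ≠ 0 := by
    have h : -Df γ t ^ 2 + Df γ t ^ 2 * γ * 2 = (2*γ-1) * Df γ t ^ 2 := by ring
    rw [h]; exact mul_ne_zero h2γne (pow_ne_zero _ hDne)
  have dB : -(Df γ t ^ 3 * γ) + Df γ t ^ 3 * γ ^ 2 * 2 ≠ 0 := by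
    have h : -(Df γ t ^ 3 * γ) + Df γ t ^ 3 * γ ^ 2 * 2 = γ * (2*γ-1) * Df γ t ^ 3 := by ring
    rw [h]; exact mul_ne_zero (mul_ne_zero hγne h2γne) (pow_ne_zero _ hDne)
  have dC : -(Df γ t ^ 2 * γ) + Df γ t ^ 2 * γ ^ 2 * 2 ≠ 0 := by
    have h : -(Df γ t ^ 2 * γ) + Df γ t ^ 2 * γ ^ 2 * 2 = γ * (2*γ-1) * Df γ t ^ 2 := by ring
    rw [h]; exact mul_ne_zero (mul_ne_zero hγne h2γne) (pow_ne_zero _ hDne)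
  field_simp
  ring
end
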